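/- arXiv:2207.14034 — 4 statements merged into one kernel-verified Lean document; each statement's English description precedes it below -/
import Mathlib

section
/- Let K be a compact group acting linearly and continuously on a finite-dimensional real vector space E via π: K → GL(E), let p(v) = ∫_K π(k)v dμ_K(k) be averaging against normalized Haar measure, and let Ω ⊆ E be a K-invariant convex subset that is open or closed. Then p(Ω) = Ω ∩ E^K, where E^K is the subspace of K-fixed vectors. -/
open MeasureTheory

/-- Let `K` be a compact group acting linearly and
continuously on a finite-dimensional real vector space `E` via
`π : K → GL(E)`, let `p(v) = ∫_K π(k)v dμ_K(k)` be the averaging against the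
normalized Haar measure, and let `Ω ⊆ E` be a `K`-invariant convex subset
that is open or closed.  Then `p(Ω) = Ω ∩ E^K`, where `E^K` is the set of
`K`-fixed vectors. -/
theorem haar_average_image_of_invariant_convex
    (K : Type*) [Group K] [TopologicalSpace K] [IsTopologicalGroup K]
    [CompactSpace K] [MeasurableSpace K] [BorelSpace K]
    (μ : Measure K) [μ.IsHaarMeasure] [IsProbabilityMeasure μ]
    (E : Type*) [NormedAddCommGroup E] [NormedSpace ℝ E]
    [FiniteDimensional ℝ E]
    (π : K →* (E →L[ℝ] E))
    (hcont : Continuous fun p : K × E => π p.1 p.2)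
    (Ω : Set E) (hconv : Convex ℝ Ω)
    (hinv : ∀ k : K, (π k) '' Ω = Ω)
    (hoc : IsOpen Ω ∨ IsClosed Ω) :
    (fun v => ∫ k, π k v ∂μ) '' Ω = Ω ∩ {v : E | ∀ k : K, π k v = v} := by
  have hcont' : ∀ v : E, Continuous fun k : K => π k v := fun v =>
    hcont.comp (continuous_id.prodMk continuous_const)
  have hI : ∀ v : E, Integrable (fun k => π k v) μ := fun v =>
    (hcont' v).integrable_of_hasCompactSupport
      (HasCompactSupport.of_compactSpace _)
  have hmem : ∀ v ∈ Ω, ∀ k : K, π k v ∈ Ω := fun v hv k =>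
    (hinv k) ▸ Set.mem_image_of_mem _ hv
  -- the average is a fixed vector
  have hfix : ∀ v : E, ∀ k' : K, π k' (∫ k, π k v ∂μ) = ∫ k, π k v ∂μ := by
    intro v k'
    rw [← ContinuousLinearMap.integral_comp_comm (π k') (hI v)]
    have : ∀ k : K, π k' (π k v) = π (k' * k) v := by
      intro k
      rw [map_mul]
      rfl
    simp_rw [this]
    exact integral_mul_left_eq_self (fun k => π k v) k'
  -- the average belongs to Ω
  have hΩ : ∀ v ∈ Ω, (∫ k, π k v ∂μ) ∈ Ω := by
    intro v hv
    rcases hoc with hopen | hclosed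
    · by_contra hnot
      obtain ⟨f, hf⟩ := geometric_hahn_banach_open_point hconv hopen hnot
      have hcomm : ∫ k, f (π k v) ∂μ = f (∫ k, π k v ∂μ) :=
        ContinuousLinearMap.integral_comp_comm f (hI v)
      set c : ℝ := f (∫ k, π k v ∂μ) with hc
      have hlt : ∀ k : K, f (π k v) < c := fun k => hf _ (hmem v hv k)
      have hIf : Integrable (fun k => f (π k v)) μ := f.integrable_comp (hI v)
      have hIg : Integrable (fun k => c - f (π k v)) μ := (integrable_const c).sub hIf
      have hzero : ∫ k, (c - f (π k v)) ∂μ = 0 := by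
        rw [integral_sub (integrable_const c) hIf]
        simp [hcomm, hc]
      have := (integral_eq_zero_iff_of_nonneg
        (fun k => sub_nonneg.2 (hlt k).le) hIg).mp hzero
      obtain ⟨k, hk⟩ := this.exists
      simp only [Pi.zero_apply] at hk
      exact absurd hk (sub_ne_zero.2 (hlt k).ne')
    · exact hconv.integral_mem hclosed
        (Filter.Eventually.of_forall fun k => hmem v hv k) (hI v)
  ext u
  constructor
  · rintro ⟨v, hv, rfl⟩
    exact ⟨hΩ v hv, hfix v⟩
  · rintro ⟨hu, hfixu⟩
    refine ⟨u, hu, ?_⟩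
    simp only [Set.mem_setOf_eq] at hfixu
    simp [hfixu]
end

section
/- Let K be a compact group acting linearly on a finite-dimensional real vector space E with fixed-point projection p (averaging over Haar measure), and let Ω ⊆ E be a K-invariant convex subset with nonempty interior. Then p(Ω°) = Ω° ∩ E^K = (Ω ∩ E^K)° where the last interior is taken in the subspace E^K. -/
open MeasureTheory

/-- Let `K` be a compact group acting linearly on a
finite-dimensional real vector space `E` with fixed-point projection
`p(v) = ∫_K π(k)v dμ_K(k)` (averaging over normalized Haar measure), and let
`Ω ⊆ E` be a `K`-invariant convex subset with nonempty interior.  Then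
`p(Ω°) = Ω° ∩ E^K = (Ω ∩ E^K)°`, where the last interior is the relative
interior taken in the subspace `E^K` of `K`-fixed vectors. -/
theorem haar_average_interior_of_invariant_convex
    (K : Type*) [Group K] [TopologicalSpace K] [IsTopologicalGroup K]
    [CompactSpace K] [MeasurableSpace K] [BorelSpace K]
    (μ : Measure K) [μ.IsHaarMeasure] [IsProbabilityMeasure μ]
    (E : Type*) [NormedAddCommGroup E] [NormedSpace ℝ E]
    [FiniteDimensional ℝ E]
    (π : K →* (E →L[ℝ] E))
    (hcont : Continuous fun p : K × E => π p.1 p.2)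
    (Ω : Set E) (hconv : Convex ℝ Ω)
    (hinv : ∀ k : K, (π k) '' Ω = Ω)
    (hne : (interior Ω).Nonempty) :
    (fun v => ∫ k, π k v ∂μ) '' (interior Ω)
        = interior Ω ∩ {v : E | ∀ k : K, π k v = v} ∧
    interior Ω ∩ {v : E | ∀ k : K, π k v = v}
        = Subtype.val ''
            (interior ((Subtype.val ⁻¹' Ω) : Set {v : E // ∀ k : K, π k v = v})) := by
  set F : Set E := {v : E | ∀ k : K, π k v = v} with hF
  -- continuity of k ↦ π k v
  have hc : ∀ v : E, Continuous fun k : K => π k v := fun v =>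
    hcont.comp (continuous_id.prodMk continuous_const)
  have hci : ∀ v : E, Integrable (fun k : K => π k v) μ := fun v =>
    (hc v).integrable_of_hasCompactSupport (isClosed_tsupport _).isCompact
  -- uniform bound on operator norms
  obtain ⟨M, hM⟩ : ∃ M, ∀ k : K, ‖π k‖ ≤ M := by
    apply banach_steinhaus
    intro v
    obtain ⟨C, hC⟩ := (isCompact_range (hc v)).isBounded.exists_norm_le
    exact ⟨C, fun k => hC _ ⟨k, rfl⟩⟩
  set M' : ℝ := max M 1 with hM'
  have hM'1 : (1:ℝ) ≤ M' := le_max_right _ _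
  have hM'0 : (0:ℝ) < M' := lt_of_lt_of_le one_pos hM'1
  have hMle : ∀ k : K, ‖π k‖ ≤ M' := fun k => (hM k).trans (le_max_left _ _)
  -- π k (π k⁻¹ u) = u
  have hcancel : ∀ (k : K) (u : E), π k (π k⁻¹ u) = u := by
    intro k u
    rw [← ContinuousLinearMap.comp_apply, ← ContinuousLinearMap.mul_def, ← map_mul,
      mul_inv_cancel, map_one, ContinuousLinearMap.one_apply]
  -- key: the average of an interior point is in interior Ω ∩ F
  have key : ∀ x ∈ interior Ω, (∫ k, π k x ∂μ) ∈ interior Ω ∩ F := by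
    intro x hx
    obtain ⟨ε, hε, hball⟩ := Metric.isOpen_iff.mp isOpen_interior x hx
    set q : E := ∫ k, π k x ∂μ with hq
    -- q + u ∈ closure Ω for small u
    have hcl : ∀ u : E, ‖u‖ < ε / M' → q + u ∈ closure Ω := by
      intro u hu
      have : q + u = ∫ k, (π k x + u) ∂μ := by
        rw [integral_add (hci x) (integrable_const u), integral_const, probReal_univ,
          one_smul]
      rw [this]
      refine (hconv.closure).integral_mem isClosed_closure
        (Filter.Eventually.of_forall fun k => ?_) ((hci x).add (integrable_const u))
      have h1 : x + π k⁻¹ u ∈ Ω := by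
        apply interior_subset
        apply hball
        rw [Metric.mem_ball, dist_eq_norm]
        simp only [add_sub_cancel_left]
        calc ‖π k⁻¹ u‖ ≤ ‖π k⁻¹‖ * ‖u‖ := (π k⁻¹).le_opNorm u
          _ ≤ M' * ‖u‖ := by
              exact mul_le_mul_of_nonneg_right (hMle _) (norm_nonneg _)
          _ < M' * (ε / M') := by
              exact mul_lt_mul_of_pos_left hu hM'0
          _ = ε := by field_simp
      have h2 : π k (x + π k⁻¹ u) ∈ Ω := by
        rw [← hinv k]; exact Set.mem_image_of_mem _ h1
      have h3 : π k (x + π k⁻¹ u) = π k x + u := by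
        rw [map_add, hcancel]
      rw [← h3]
      exact subset_closure h2
    -- q ∈ interior Ω via a combination of x and a point slightly beyond q
    have hqi : q ∈ interior Ω := by
      set t : ℝ := (ε / M') / (2 * (‖q - x‖ + 1)) with ht
      have hden : (0:ℝ) < ‖q - x‖ + 1 := by positivity
      have ht0 : 0 < t := by positivity
      have hy : q + t • (q - x) ∈ closure Ω := by
        apply hcl
        rw [norm_smul, Real.norm_eq_abs, abs_of_pos ht0, ht]
        rw [div_mul_eq_mul_div, div_lt_iff₀ (by positivity)]
        have h1 : ‖q - x‖ < ‖q - x‖ + 1 := by linarith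
        have h2 : (0:ℝ) < ε / M' := by positivity
        nlinarith [norm_nonneg (q - x)]
      clear_value t
      have h1t : (1 + t) ≠ 0 := by positivity
      have hco := hconv.combo_interior_closure_mem_interior hx hy
        (a := t / (1 + t)) (b := 1 / (1 + t))
        (by positivity) (by positivity) (by field_simp; ring)
      have : (t / (1 + t)) • x + (1 / (1 + t)) • (q + t • (q - x)) = q := by
        match_scalars <;> field_simp <;> ring
      rwa [this] at hco
    refine ⟨hqi, fun k' => ?_⟩
    calc π k' q = ∫ k, π k' (π k x) ∂μ := ((π k').integral_comp_comm (hci x)).symm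
      _ = ∫ k, π (k' * k) x ∂μ := by
          simp only [← ContinuousLinearMap.comp_apply, ← ContinuousLinearMap.mul_def, ← map_mul]
      _ = q := integral_mul_left_eq_self (fun k => π k x) k'
  constructor
  · apply Set.Subset.antisymm
    · rintro _ ⟨x, hx, rfl⟩; exact key x hx
    · rintro v ⟨hv, hvF⟩
      refine ⟨v, hv, ?_⟩
      simp only [hvF _]
      rw [integral_const, probReal_univ, one_smul]
  · obtain ⟨x, hx⟩ := hne
    obtain ⟨hx₀i, hx₀F⟩ := key x hx
    set x₀ : E := ∫ k, π k x ∂μ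
    apply Set.Subset.antisymm
    · rintro v ⟨hv, hvF⟩
      refine ⟨⟨v, hvF⟩, ?_, rfl⟩
      exact interior_maximal (Set.preimage_mono interior_subset)
        (isOpen_interior.preimage continuous_subtype_val) hv
    · rintro _ ⟨⟨w, hwF⟩, hw, rfl⟩
      refine ⟨?_, hwF⟩
      obtain ⟨δ, hδ, hball⟩ := Metric.isOpen_iff.mp isOpen_interior _ hw
      set t : ℝ := δ / (2 * (‖w - x₀‖ + 1)) with ht
      have hden : (0:ℝ) < ‖w - x₀‖ + 1 := by positivity
      have ht0 : 0 < t := by positivity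
      set w' : E := w + t • (w - x₀) with hw'
      have hw'F : w' ∈ F := by
        intro k
        simp only [hw', map_add, map_sub, (π k).map_smul, hwF k, hx₀F k]
      have hw'Ω : w' ∈ Ω := by
        have : (⟨w', hw'F⟩ : {v : E // ∀ k : K, π k v = v}) ∈ Metric.ball ⟨w, hwF⟩ δ := by
          rw [Metric.mem_ball, Subtype.dist_eq, dist_eq_norm]
          simp only [hw', add_sub_cancel_left]
          rw [norm_smul, Real.norm_eq_abs, abs_of_pos ht0, ht]
          rw [div_mul_eq_mul_div, div_lt_iff₀ (by positivity)]
          nlinarith [norm_nonneg (w - x₀)]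
        exact (interior_subset (hball this) : (⟨w', hw'F⟩ : {v : E // ∀ k : K, π k v = v}) ∈ Subtype.val ⁻¹' Ω)
      rw [hw'] at hw'Ω
      clear_value t
      have h1t : (1 + t) ≠ 0 := by positivity
      have hco := hconv.combo_interior_self_mem_interior hx₀i hw'Ω
        (a := t / (1 + t)) (b := 1 / (1 + t))
        (by positivity) (by positivity) (by field_simp; ring)
      have : (t / (1 + t)) • x₀ + (1 / (1 + t)) • (w + t • (w - x₀)) = w := by
        match_scalars <;> field_simp <;> ring
      rwa [this] at hco
end

section
/- Let Σ be an irreducible root system with a 3-grading Σ = Σ₋₁ ∪ Σ₀ ∪ Σ₁ defined by an Euler element h (so Σ_j = {α : α(h) = j}), let Γ = {γ₁,…,γ_r} ⊆ Σ₁ be a maximal set of long strongly orthogonal roots, and set h_s = (1/2)·Σ_{j=1}^r γ_j^∨. Then h is symmetric (i.e., −h lies in the Weyl group orbit of h) if and only if h = h_s. -/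
open scoped RealInnerProductSpace

namespace EulerStmt10

variable {V : Type*} [NormedAddCommGroup V] [InnerProductSpace ℝ V]

/-- the reflection in `α` as a linear map -/
noncomputable def rlin (α : V) : V →ₗ[ℝ] V where
  toFun x := x - (2 * ⟪α, x⟫ / ⟪α, α⟫) • α
  map_add' x y := by
    simp only [inner_add_right]
    rw [show (2 * (⟪α, x⟫ + ⟪α, y⟫) / ⟪α, α⟫) = 2 * ⟪α, x⟫ / ⟪α, α⟫ + 2 * ⟪α, y⟫ / ⟪α, α⟫ by ring]
    rw [add_smul]; abel
  map_smul' c x := by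
    simp only [real_inner_smul_right, RingHom.id_apply, smul_sub, smul_smul]
    rw [show (2 * (c * ⟪α, x⟫) / ⟪α, α⟫) = c * (2 * ⟪α, x⟫ / ⟪α, α⟫) by ring]

lemma rlin_apply (α x : V) : rlin α x = x - (2 * ⟪α, x⟫ / ⟪α, α⟫) • α := rfl

lemma inner_self_ne_zero' {α : V} (h : α ≠ 0) : ⟪α, α⟫ ≠ 0 :=
  fun hc => h (inner_self_eq_zero.mp hc)

lemma inner_self_pos' {α : V} (h : α ≠ 0) : 0 < ⟪α, α⟫ :=
  lt_of_le_of_ne real_inner_self_nonneg (Ne.symm (inner_self_ne_zero' h))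

lemma inner_rlin (α x : V) : ⟪α, rlin α x⟫ = -⟪α, x⟫ := by
  by_cases hα : α = 0
  · simp [rlin_apply, hα]
  · have hA := inner_self_ne_zero' hα
    rw [rlin_apply, inner_sub_right, real_inner_smul_right]
    field_simp
    ring

lemma rlin_invol (α : V) : Function.Involutive (rlin α) := by
  intro x
  by_cases hα : α = 0
  · simp [rlin_apply, hα]
  · have hA := inner_self_ne_zero' hα
    rw [rlin_apply (x := rlin α x), inner_rlin, rlin_apply]
    rw [show (2 * -⟪α, x⟫ / ⟪α, α⟫) = -(2 * ⟪α, x⟫ / ⟪α, α⟫) by ring, neg_smul]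
    abel

/-- the reflection in `α` as a linear equivalence -/
noncomputable def E (α : V) : V ≃ₗ[ℝ] V := LinearEquiv.ofInvolutive (rlin α) (rlin_invol α)

lemma E_apply (α x : V) : E α x = x - (2 * ⟪α, x⟫ / ⟪α, α⟫) • α := rfl

lemma E_inner (α x y : V) : ⟪E α x, E α y⟫ = ⟪x, y⟫ := by
  by_cases hα : α = 0
  · simp [E_apply, hα]
  · have hA := inner_self_ne_zero' hα
    simp only [E_apply, inner_sub_left, inner_sub_right, real_inner_smul_left,
      real_inner_smul_right]
    rw [real_inner_comm x α]
    field_simp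
    ring

lemma E_mul_self (α : V) : E α * E α = 1 := by
  apply LinearEquiv.ext; intro x; exact rlin_invol α x

lemma E_inv (α : V) : (E α)⁻¹ = E α := by
  rw [eq_comm, eq_inv_iff_mul_eq_one, E_mul_self]

lemma E_self (α : V) (hα : α ≠ 0) : E α α = -α := by
  have hA := inner_self_ne_zero' hα
  rw [E_apply, mul_div_assoc, div_self hA, mul_one, two_smul]
  abel

lemma E_fix {α x : V} (h : ⟪α, x⟫ = 0) : E α x = x := by
  simp [E_apply, h]

lemma E_smul {c : ℝ} (hc : c ≠ 0) (α : V) : E (c • α) = E α := by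
  apply LinearEquiv.ext; intro x
  by_cases hα : α = 0
  · simp [E_apply, hα]
  · have hA := inner_self_ne_zero' hα
    simp only [E_apply, real_inner_smul_left, real_inner_smul_right, smul_smul]
    have hs : 2 * (c * ⟪α, x⟫) / (c * (c * ⟪α, α⟫)) * c = 2 * ⟪α, x⟫ / ⟪α, α⟫ := by
      field_simp
    rw [hs]

/-- conjugation formula -/
lemma E_conj (u : V ≃ₗ[ℝ] V) (hu : ∀ x y, ⟪u x, u y⟫ = ⟪x, y⟫) (α : V) :
    E (u α) = u * E α * u⁻¹ := by
  apply LinearEquiv.ext; intro x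
  show E (u α) x = u (E α (u⁻¹ x))
  rw [E_apply, E_apply, map_sub, map_smul]
  have h1 : ⟪u α, x⟫ = ⟪α, u⁻¹ x⟫ := by
    have e : u (u⁻¹ x) = x := u.apply_symm_apply x
    conv_lhs => rw [← e]
    rw [hu]
  have h2 : ⟪u α, u α⟫ = ⟪α, α⟫ := hu α α
  rw [h1, h2]
  have e : u (u⁻¹ x) = x := u.apply_symm_apply x
  rw [e]

section RS
open Classical

variable {Φ : Set V}

/-- the generating set of reflections from the problem statement -/
def genSet (Φ : Set V) : Set (V ≃ₗ[ℝ] V) :=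
  {w : V ≃ₗ[ℝ] V | ∃ α ∈ Φ, ∀ x, w x = x - (2 * ⟪α, x⟫ / ⟪α, α⟫) • α}

lemma E_mem_genSet {α : V} (hα : α ∈ Φ) : E α ∈ genSet Φ :=
  ⟨α, hα, fun x => rfl⟩

lemma genSet_eq {w : V ≃ₗ[ℝ] V} (hw : w ∈ genSet Φ) : ∃ α ∈ Φ, w = E α := by
  obtain ⟨α, hα, hfor⟩ := hw
  exact ⟨α, hα, LinearEquiv.ext fun x => hfor x⟩

variable (Φ) in
/-- the Weyl group -/
def WGrp : Subgroup (V ≃ₗ[ℝ] V) := Subgroup.closure (genSet Φ)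

section W

variable (hfin : Φ.Finite)
  (hrefl : ∀ α ∈ Φ, ∀ β ∈ Φ, β - (2 * ⟪α, β⟫ / ⟪α, α⟫) • α ∈ Φ)

include hrefl in
lemma E_root_mem {α : V} (hα : α ∈ Φ) {β : V} (hβ : β ∈ Φ) : E α β ∈ Φ :=
  hrefl α hα β hβ

include hfin hrefl in
lemma W_props {w : V ≃ₗ[ℝ] V} (hw : w ∈ WGrp Φ) :
    (∀ x y : V, ⟪w x, w y⟫ = ⟪x, y⟫) ∧ (∀ α ∈ Φ, w α ∈ Φ) := by
  have key : ∀ u : V ≃ₗ[ℝ] V,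
      ((∀ x y : V, ⟪u x, u y⟫ = ⟪x, y⟫) ∧ (∀ α ∈ Φ, u α ∈ Φ)) →
      ((∀ x y : V, ⟪u⁻¹ x, u⁻¹ y⟫ = ⟪x, y⟫) ∧ (∀ α ∈ Φ, u⁻¹ α ∈ Φ)) := by
    intro u ⟨h1, h2⟩
    have hinv : ∀ x y : V, ⟪u⁻¹ x, u⁻¹ y⟫ = ⟪x, y⟫ := by
      intro x y
      have h := h1 (u⁻¹ x) (u⁻¹ y)
      have e1 : u (u⁻¹ x) = x := u.apply_symm_apply x
      have e2 : u (u⁻¹ y) = y := u.apply_symm_apply y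
      rw [e1, e2] at h; exact h.symm
    refine ⟨hinv, ?_⟩
    -- u maps Φ into Φ injectively, Φ finite ⇒ image is Φ
    have himg : (fun x => u x) '' Φ = Φ := by
      apply Set.eq_of_subset_of_ncard_le
      · rintro x ⟨α, hα, rfl⟩; exact h2 α hα
      · rw [Set.ncard_image_of_injective _ u.injective]
      · exact hfin
    intro α hα
    rw [← himg] at hα
    obtain ⟨β, hβ, hbe⟩ := hα
    have : u⁻¹ α = β := by rw [← hbe]; exact u.symm_apply_apply β
    rwa [this]
  refine Subgroup.closure_induction ?_ ?_ ?_ ?_ hw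
  · intro w hwg
    obtain ⟨α, hα, rfl⟩ := genSet_eq hwg
    exact ⟨fun x y => E_inner α x y, fun β hβ => E_root_mem hrefl hα hβ⟩
  · exact ⟨fun x y => rfl, fun α hα => hα⟩
  · rintro a b _ _ ⟨a1, a2⟩ ⟨b1, b2⟩
    constructor
    · intro x y
      show ⟪a (b x), a (b y)⟫ = _
      rw [a1, b1]
    · intro α hα
      exact a2 _ (b2 α hα)
  · intro u _ hu
    exact key u hu

include hfin hrefl in
lemma W_inner {w : V ≃ₗ[ℝ] V} (hw : w ∈ WGrp Φ) (x y : V) : ⟪w x, w y⟫ = ⟪x, y⟫ :=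
  (W_props hfin hrefl hw).1 x y

include hfin hrefl in
lemma W_root {w : V ≃ₗ[ℝ] V} (hw : w ∈ WGrp Φ) {α : V} (hα : α ∈ Φ) : w α ∈ Φ :=
  (W_props hfin hrefl hw).2 α hα

variable (hzero : (0 : V) ∉ Φ)

include hzero in
lemma root_ne_zero {α : V} (hα : α ∈ Φ) : α ≠ 0 := fun hc => hzero (hc ▸ hα)

include hzero hrefl in
lemma neg_mem {α : V} (hα : α ∈ Φ) : -α ∈ Φ := by
  have := E_root_mem hrefl hα hα
  rwa [E_self α (root_ne_zero hzero hα)] at this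

end W

section B

variable (hzero : (0 : V) ∉ Φ)
  (hrefl : ∀ α ∈ Φ, ∀ β ∈ Φ, β - (2 * ⟪α, β⟫ / ⟪α, α⟫) • α ∈ Φ)
  (hint : ∀ α ∈ Φ, ∀ β ∈ Φ, ∃ n : ℤ, 2 * ⟪α, β⟫ / ⟪β, β⟫ = (n : ℝ))

include hzero hrefl hint in
/-- key root-system lemma: positive inner product forces the difference to be a root -/
lemma sub_mem {α β : V} (hα : α ∈ Φ) (hβ : β ∈ Φ) (hpos : 0 < ⟪α, β⟫) (hne : α ≠ β) :
    α - β ∈ Φ := by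
  have hαz := root_ne_zero hzero hα
  have hβz := root_ne_zero hzero hβ
  have hA : (0:ℝ) < ⟪α, α⟫ := inner_self_pos' hαz
  have hB : (0:ℝ) < ⟪β, β⟫ := inner_self_pos' hβz
  obtain ⟨q, hq⟩ := hint α hα β hβ
  obtain ⟨p, hp⟩ := hint β hβ α hα
  rw [real_inner_comm α β] at hp
  -- p, q ≥ 1
  have hqpos : (0:ℝ) < q := by rw [← hq]; positivity
  have hppos : (0:ℝ) < p := by rw [← hp]; positivity
  have hq1 : 1 ≤ q := by exact_mod_cast hqpos
  have hp1 : 1 ≤ p := by exact_mod_cast hppos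
  -- Cauchy–Schwarz: p*q ≤ 4
  have hcs : ⟪α, β⟫ ≤ ‖α‖ * ‖β‖ := real_inner_le_norm α β
  have hA' : ⟪α, α⟫ = ‖α‖ * ‖α‖ := real_inner_self_eq_norm_mul_norm α
  have hB' : ⟪β, β⟫ = ‖β‖ * ‖β‖ := real_inner_self_eq_norm_mul_norm β
  have hpq4 : (p:ℝ) * q ≤ 4 := by
    rw [← hp, ← hq]
    rw [div_mul_div_comm]
    rw [div_le_iff₀ (mul_pos hA hB)]
    have h2 : ⟪α,β⟫ * ⟪α,β⟫ ≤ (‖α‖*‖β‖) * (‖α‖*‖β‖) := by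
      apply mul_le_mul hcs hcs (le_of_lt hpos) (by positivity)
    nlinarith [h2, hA, hB]
  have hpq4' : p * q ≤ 4 := by exact_mod_cast hpq4
  -- main case split
  by_cases hq1' : q = 1
  · have := hrefl β hβ α hα
    rw [real_inner_comm α β] at this
    rw [hq, hq1'] at this
    simpa using this
  by_cases hp1' : p = 1
  · have := hrefl α hα β hβ
    rw [hp, hp1'] at this
    simp only [Int.cast_one, one_smul] at this
    have := neg_mem hrefl hzero this
    rwa [neg_sub] at this
  -- now p,q ≥ 2, so p*q = 4, p = q = 2, equality in CS
  have hp2 : 2 ≤ p := by omega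
  have hq2 : 2 ≤ q := by omega
  have hpq : p = 2 ∧ q = 2 := by constructor <;> nlinarith [hpq4']
  -- equality in Cauchy-Schwarz
  have heq : ⟪α,β⟫ * ⟪α,β⟫ = ⟪α,α⟫ * ⟪β,β⟫ := by
    have : ((p:ℝ)) * q = 4 := by rw [hpq.1, hpq.2]; norm_num
    rw [← hp, ← hq, div_mul_div_comm] at this
    field_simp at this
    linarith [this]
  have hna : (0:ℝ) < ‖α‖ := norm_pos_iff.mpr hαz
  have hnb : (0:ℝ) < ‖β‖ := norm_pos_iff.mpr hβz
  have heq2 : ⟪α,β⟫ / (‖α‖ * ‖β‖) = 1 := by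
    rw [div_eq_one_iff_eq (ne_of_gt (mul_pos hna hnb))]
    nlinarith [heq, hA', hB', hpos, hcs]
  obtain ⟨-, c, hc, hβc⟩ := (real_inner_div_norm_mul_norm_eq_one_iff α β).mp heq2
  -- q = 2 gives c = 1, contradiction with α ≠ β
  exfalso
  apply hne
  have : (q:ℝ) = 2 / c := by
    rw [← hq, hβc, real_inner_smul_right, real_inner_smul_left, real_inner_smul_right]
    field_simp
  rw [hpq.2] at this
  have hc1 : c = 1 := by
    field_simp at this
    push_cast at this
    linarith [this]
  rw [hβc, hc1, one_smul]

end B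

section Long

variable (hfin : Φ.Finite) (hzero : (0 : V) ∉ Φ)
  (hspan : Submodule.span ℝ Φ = ⊤)
  (hrefl : ∀ α ∈ Φ, ∀ β ∈ Φ, β - (2 * ⟪α, β⟫ / ⟪α, α⟫) • α ∈ Φ)
  (hirr : ∀ Φ₁ Φ₂ : Set V, Φ₁ ∪ Φ₂ = Φ → Φ₁ ∩ Φ₂ = ∅ →
      (∀ a ∈ Φ₁, ∀ b ∈ Φ₂, ⟪a, b⟫ = 0) → Φ₁ = ∅ ∨ Φ₂ = ∅)

include hfin hzero hspan hrefl hirr in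
/-- every root is non-orthogonal to some longest root -/
lemma exists_long_not_orth {β : V} (hβ : β ∈ Φ) :
    ∃ ℓ ∈ Φ, (∀ α ∈ Φ, ‖α‖ ≤ ‖ℓ‖) ∧ ⟪β, ℓ⟫ ≠ 0 := by
  classical
  set Lg : Set V := {α ∈ Φ | ∀ α' ∈ Φ, ‖α'‖ ≤ ‖α‖} with hLg
  -- Lg is nonempty
  obtain ⟨m, hm, hmax⟩ := Finset.exists_max_image hfin.toFinset (fun x => ‖x‖)
    ⟨β, hfin.mem_toFinset.mpr hβ⟩
  have hmΦ : m ∈ Φ := hfin.mem_toFinset.mp hm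
  have hmLg : m ∈ Lg := ⟨hmΦ, fun α' hα' => hmax α' (hfin.mem_toFinset.mpr hα')⟩
  set U : Submodule ℝ V := Submodule.span ℝ Lg with hU
  -- reflections preserve Lg
  have hELg : ∀ a ∈ Φ, ∀ u ∈ Lg, E a u ∈ Lg := by
    rintro a ha u ⟨huΦ, hulong⟩
    have h1 : E a u ∈ Φ := E_root_mem hrefl ha huΦ
    have h2 : ‖E a u‖ = ‖u‖ := by
      have := E_inner a u u
      rw [real_inner_self_eq_norm_mul_norm, real_inner_self_eq_norm_mul_norm] at this
      nlinarith [norm_nonneg (E a u), norm_nonneg u]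
    exact ⟨h1, fun α' hα' => h2 ▸ hulong α' hα'⟩
  -- U is invariant under reflections in roots
  have hEU : ∀ a ∈ Φ, ∀ x ∈ U, E a x ∈ U := by
    intro a ha x hx
    induction hx using Submodule.span_induction with
    | mem y hy => exact Submodule.subset_span (hELg a ha y hy)
    | zero => rw [map_zero]; exact Submodule.zero_mem U
    | add y z _ _ hy hz => rw [map_add]; exact Submodule.add_mem U hy hz
    | smul c y _ hy => rw [map_smul]; exact Submodule.smul_mem U c hy
  -- dichotomy: every root is in U or orthogonal to U
  have hdich : ∀ a ∈ Φ, a ∈ U ∨ (∀ x ∈ U, ⟪a, x⟫ = 0) := by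
    intro a ha
    by_cases hcase : ∀ x ∈ U, ⟪a, x⟫ = 0
    · exact Or.inr hcase
    · push_neg at hcase
      obtain ⟨x, hxU, hxne⟩ := hcase
      left
      have hEx : E a x ∈ U := hEU a ha x hxU
      have hxa : x - E a x = (2 * ⟪a, x⟫ / ⟪a, a⟫) • a := by
        rw [E_apply]; abel
      have hc : (2 * ⟪a, x⟫ / ⟪a, a⟫) ≠ 0 := by
        have haz := root_ne_zero hzero ha
        have := inner_self_ne_zero' haz
        intro hcon
        rw [div_eq_zero_iff] at hcon
        rcases hcon with hcon | hcon
        · exact hxne (by linarith [hcon])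
        · exact this hcon
      have : a = (2 * ⟪a, x⟫ / ⟪a, a⟫)⁻¹ • (x - E a x) := by
        rw [hxa, smul_smul, inv_mul_cancel₀ hc, one_smul]
      rw [this]
      exact Submodule.smul_mem U _ (Submodule.sub_mem U hxU hEx)
  -- apply irreducibility to conclude U = ⊤
  have hUtop : U = ⊤ := by
    have := hirr {x ∈ Φ | x ∈ U} {x ∈ Φ | x ∉ U} ?_ ?_ ?_
    · rcases this with h1 | h2
      · exfalso
        have : m ∈ {x ∈ Φ | x ∈ U} := ⟨hmΦ, Submodule.subset_span hmLg⟩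
        rw [h1] at this; exact this
      · have hsub : Φ ⊆ U := by
          intro x hx
          by_contra hxU
          have : x ∈ {x ∈ Φ | x ∉ U} := ⟨hx, hxU⟩
          rw [h2] at this; exact this
        rw [eq_top_iff, ← hspan]
        exact Submodule.span_le.mpr hsub
    · ext x; constructor
      · rintro (⟨hx, -⟩ | ⟨hx, -⟩) <;> exact hx
      · intro hx
        by_cases hxU : x ∈ U
        · exact Or.inl ⟨hx, hxU⟩
        · exact Or.inr ⟨hx, hxU⟩
    · ext x
      simp only [Set.mem_inter_iff, Set.mem_setOf_eq, Set.mem_empty_iff_false, iff_false]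
      rintro ⟨⟨-, h1⟩, ⟨-, h2⟩⟩; exact h2 h1
    · rintro a ⟨haΦ, haU⟩ b ⟨hbΦ, hbU⟩
      rcases hdich b hbΦ with hbU' | hborth
      · exact absurd hbU' hbU
      · rw [real_inner_comm]; exact hborth a haU
  -- conclude
  by_contra hcon
  push_neg at hcon
  have hβz := root_ne_zero hzero hβ
  have hβorth : ∀ x ∈ U, ⟪β, x⟫ = 0 := by
    intro x hx
    induction hx using Submodule.span_induction with
    | mem y hy => exact hcon y hy.1 hy.2
    | zero => exact inner_zero_right β
    | add y z _ _ hy hz => rw [inner_add_right, hy, hz]; norm_num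
    | smul c y _ hy => rw [real_inner_smul_right, hy]; ring
  have : ⟪β, β⟫ = 0 := hβorth β (hUtop ▸ Submodule.mem_top)
  exact inner_self_ne_zero' hβz this

end Long

section Gamma

variable (hzero : (0 : V) ∉ Φ)
  (hrefl : ∀ α ∈ Φ, ∀ β ∈ Φ, β - (2 * ⟪α, β⟫ / ⟪α, α⟫) • α ∈ Φ)
  (hint : ∀ α ∈ Φ, ∀ β ∈ Φ, ∃ n : ℤ, 2 * ⟪α, β⟫ / ⟪β, β⟫ = (n : ℝ))
  (h : V) (heuler : ∀ α ∈ Φ, ⟪α, h⟫ ∈ ({-1, 0, 1} : Set ℝ))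
  {r : ℕ} (γ : Fin r → V)
  (hγroot : ∀ j, γ j ∈ Φ) (hγgrade : ∀ j, ⟪γ j, h⟫ = 1)

include hzero hrefl hint heuler hγroot hγgrade in
/-- roots of grade 1 pair nonnegatively with the `γ j` -/
lemma grade1_nonneg {α : V} (hα : α ∈ Φ) (hα1 : ⟪α, h⟫ = 1) (j : Fin r) :
    0 ≤ ⟪α, γ j⟫ := by
  by_contra hneg
  push_neg at hneg
  have hδ : -γ j ∈ Φ := neg_mem hrefl hzero (hγroot j)
  have hpos : 0 < ⟪α, -γ j⟫ := by rw [inner_neg_right]; linarith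
  have hne : α ≠ -γ j := by
    intro hc
    have : ⟪α, h⟫ = -1 := by rw [hc, inner_neg_left, hγgrade j]
    linarith [hα1, this]
  have hmem : α - -γ j ∈ Φ := sub_mem hzero hrefl hint hα hδ hpos hne
  have : α - -γ j = α + γ j := by abel
  rw [this] at hmem
  have := heuler _ hmem
  rw [inner_add_left, hα1, hγgrade j] at this
  simp only [Set.mem_insert_iff, Set.mem_singleton_iff] at this
  rcases this with hc | hc | hc <;> norm_num at hc

include hzero hrefl hint heuler hγroot hγgrade in
/-- strongly orthogonal grade-1 roots are orthogonal -/
lemma gam_orth (hγinj : Function.Injective γ)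
    (hγso : ∀ i j, i ≠ j → γ i + γ j ∉ Φ ∧ γ i - γ j ∉ Φ)
    {i j : Fin r} (hij : i ≠ j) : ⟪γ i, γ j⟫ = 0 := by
  rcases lt_trichotomy (⟪γ i, γ j⟫ : ℝ) 0 with hlt | heq | hgt
  · exfalso
    have hδ : -γ j ∈ Φ := neg_mem hrefl hzero (hγroot j)
    have hpos : 0 < ⟪γ i, -γ j⟫ := by rw [inner_neg_right]; linarith
    have hne : γ i ≠ -γ j := by
      intro hc
      have : ⟪γ i, h⟫ = -1 := by rw [hc, inner_neg_left, hγgrade j]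
      rw [hγgrade i] at this; linarith
    have hmem := sub_mem hzero hrefl hint (hγroot i) hδ hpos hne
    have he : γ i - -γ j = γ i + γ j := by abel
    rw [he] at hmem
    exact (hγso i j hij).1 hmem
  · exact heq
  · exfalso
    have hne : γ i ≠ γ j := fun hc => hij (hγinj hc)
    have hmem := sub_mem hzero hrefl hint (hγroot i) (hγroot j) hgt hne
    exact (hγso i j hij).2 hmem

include hzero hrefl hint heuler hγroot hγgrade in
/-- the key "hard lemma": every grade-1 root pairs strictly positively with some `γ j` -/
lemma hard_lemma (hfin : Φ.Finite) (hspan : Submodule.span ℝ Φ = ⊤)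
    (hirr : ∀ Φ₁ Φ₂ : Set V, Φ₁ ∪ Φ₂ = Φ → Φ₁ ∩ Φ₂ = ∅ →
      (∀ a ∈ Φ₁, ∀ b ∈ Φ₂, ⟪a, b⟫ = 0) → Φ₁ = ∅ ∨ Φ₂ = ∅)
    (hγmax : ∀ β ∈ Φ, ⟪β, h⟫ = 1 → (∀ α ∈ Φ, ‖α‖ ≤ ‖β‖) →
      (∀ j, β + γ j ∉ Φ ∧ β - γ j ∉ Φ) → ∃ j, β = γ j)
    {β : V} (hβ : β ∈ Φ) (hβ1 : ⟪β, h⟫ = 1) : ∃ j, 0 < ⟪β, γ j⟫ := by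
  by_contra hcon
  push_neg at hcon
  have horth : ∀ j, ⟪β, γ j⟫ = 0 := fun j =>
    le_antisymm (hcon j) (grade1_nonneg hzero hrefl hint h heuler γ hγroot hγgrade hβ hβ1 j)
  have horth' : ∀ j, ⟪γ j, β⟫ = 0 := by
    intro j; rw [real_inner_comm]; exact horth j
  have hβz := root_ne_zero hzero hβ
  have hβB : (0:ℝ) < ⟪β, β⟫ := inner_self_pos' hβz
  have hsum : ∀ j, β + γ j ∉ Φ := by
    intro j hmem
    have := heuler _ hmem
    rw [inner_add_left, hβ1, hγgrade j] at this
    simp only [Set.mem_insert_iff, Set.mem_singleton_iff] at this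
    rcases this with hc | hc | hc <;> norm_num at hc
  by_cases hlong : ∀ α ∈ Φ, ‖α‖ ≤ ‖β‖
  · -- long case: maximality applies
    have hdiff : ∀ j, β - γ j ∉ Φ := by
      intro j hmem
      have h1 : ‖β - γ j‖ ≤ ‖β‖ := hlong _ hmem
      have h2 : ⟪β - γ j, β - γ j⟫ = ⟪β,β⟫ + ⟪γ j, γ j⟫ := by
        rw [inner_sub_left, inner_sub_right, inner_sub_right, horth j, horth' j]
        ring
      have h3 : (0:ℝ) < ⟪γ j, γ j⟫ := inner_self_pos' (root_ne_zero hzero (hγroot j))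
      rw [real_inner_self_eq_norm_mul_norm, real_inner_self_eq_norm_mul_norm,
        real_inner_self_eq_norm_mul_norm] at h2
      have h4 := mul_self_le_mul_self (norm_nonneg (β - γ j)) h1
      have h5 : (0:ℝ) < ‖γ j‖ * ‖γ j‖ := by
        rw [← real_inner_self_eq_norm_mul_norm]; exact h3
      linarith [h2, h4, h5]
    obtain ⟨j, hj⟩ := hγmax β hβ hβ1 hlong (fun j => ⟨hsum j, hdiff j⟩)
    have := horth j
    rw [hj] at this
    exact (inner_self_ne_zero' (root_ne_zero hzero (hγroot j))) this
  · -- short case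
    push_neg at hlong
    obtain ⟨α₀, hα₀, hα₀n⟩ := hlong
    obtain ⟨ℓ₀, hℓ₀, hℓ₀long, hℓ₀ne⟩ := exists_long_not_orth hfin hzero hspan hrefl hirr hβ
    obtain ⟨ℓ, hℓ, hℓlong, hℓpos⟩ :
        ∃ ℓ ∈ Φ, (∀ α ∈ Φ, ‖α‖ ≤ ‖ℓ‖) ∧ 0 < ⟪β, ℓ⟫ := by
      rcases lt_trichotomy (⟪β, ℓ₀⟫ : ℝ) 0 with hlt | heq | hgt
      · refine ⟨-ℓ₀, neg_mem hrefl hzero hℓ₀, ?_, ?_⟩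
        · intro α hα; rw [norm_neg]; exact hℓ₀long α hα
        · rw [inner_neg_right]; linarith
      · exact absurd heq hℓ₀ne
      · exact ⟨ℓ₀, hℓ₀, hℓ₀long, hgt⟩
    have hβℓ : ‖β‖ < ‖ℓ‖ := lt_of_lt_of_le hα₀n (hℓlong α₀ hα₀)
    have hℓz := root_ne_zero hzero hℓ
    have hℓL : (0:ℝ) < ⟪ℓ, ℓ⟫ := inner_self_pos' hℓz
    obtain ⟨q, hq⟩ := hint β hβ ℓ hℓ
    obtain ⟨k, hk⟩ := hint ℓ hℓ β hβ
    rw [real_inner_comm β ℓ] at hk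
    have hqpos : (0:ℝ) < q := by
      rw [← hq]; exact div_pos (by linarith [hℓpos]) hℓL
    have hkpos : (0:ℝ) < k := by
      rw [← hk]; exact div_pos (by linarith [hℓpos]) hβB
    have hq1 : 1 ≤ q := by exact_mod_cast hqpos
    have hBB : ⟪β,β⟫ = ‖β‖ * ‖β‖ := real_inner_self_eq_norm_mul_norm β
    have hLL : ⟪ℓ,ℓ⟫ = ‖ℓ‖ * ‖ℓ‖ := real_inner_self_eq_norm_mul_norm ℓ
    have hkq : (q:ℝ) < k := by
      rw [← hq, ← hk]
      rw [div_lt_div_iff₀ hℓL hβB]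
      have hlt : ⟪β,β⟫ < ⟪ℓ,ℓ⟫ := by
        rw [hBB, hLL]; nlinarith [norm_nonneg β]
      nlinarith [hℓpos]
    have hkq' : q < k := by exact_mod_cast hkq
    have hk2' : (2:ℝ) ≤ (k:ℝ) := by exact_mod_cast (by omega : (2:ℤ) ≤ k)
    -- the reflected root ℓ - k β has grade ⟪ℓ,h⟫ - k ∈ {-1,0,1}; hence k = 2, ⟪ℓ,h⟫ = 1
    have hrefβℓ := hrefl β hβ ℓ hℓ
    rw [hk] at hrefβℓ
    have hgℓ := heuler ℓ hℓ
    simp only [Set.mem_insert_iff, Set.mem_singleton_iff] at hgℓ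
    have hgrefl := heuler _ hrefβℓ
    rw [inner_sub_left, real_inner_smul_left, hβ1, mul_one] at hgrefl
    simp only [Set.mem_insert_iff, Set.mem_singleton_iff] at hgrefl
    have hgℓ1 : ⟪ℓ, h⟫ = 1 := by
      rcases hgℓ with hg | hg | hg <;> rcases hgrefl with hc | hc | hc <;>
        rw [hg] at hc ⊢ <;> linarith
    have hkk : (k:ℝ) = 2 := by
      rw [hgℓ1] at hgrefl
      rcases hgrefl with hc | hc | hc <;> linarith
    by_cases hdiff : ∀ j, ℓ - γ j ∉ Φ
    · have hsum' : ∀ j, ℓ + γ j ∉ Φ := by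
        intro j hmem
        have := heuler _ hmem
        rw [inner_add_left, hgℓ1, hγgrade j] at this
        simp only [Set.mem_insert_iff, Set.mem_singleton_iff] at this
        rcases this with hc | hc | hc <;> norm_num at hc
      obtain ⟨j, hj⟩ := hγmax ℓ hℓ hgℓ1 hℓlong (fun j => ⟨hsum' j, hdiff j⟩)
      rw [hj] at hℓpos
      exact absurd (horth j) (ne_of_gt hℓpos)
    · push_neg at hdiff
      obtain ⟨j, hδ⟩ := hdiff
      have hβδ : ⟪β, ℓ - γ j⟫ = ⟪β, ℓ⟫ := by
        rw [inner_sub_right, horth j]; ring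
      have hrefδ := hrefl β hβ _ hδ
      have hcoef : 2 * ⟪β, ℓ - γ j⟫ / ⟪β, β⟫ = 2 := by
        rw [hβδ, hk, hkk]
      rw [hcoef] at hrefδ
      have hgδ := heuler _ hrefδ
      rw [inner_sub_left, real_inner_smul_left, inner_sub_left, hgℓ1, hγgrade j,
        hβ1] at hgδ
      simp only [Set.mem_insert_iff, Set.mem_singleton_iff] at hgδ
      rcases hgδ with hc | hc | hc <;> norm_num at hc

end Gamma

section PosSys

variable (Φ : Set V) (t : V)

/-- the positive roots w.r.t. the regular functional `⟪·, t⟫` -/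
def PosS : Set V := {α | α ∈ Φ ∧ 0 < ⟪α, t⟫}

/-- the simple (indecomposable) positive roots -/
def SDelta : Set V :=
  {a | a ∈ PosS Φ t ∧ ¬∃ b ∈ PosS Φ t, ∃ c ∈ PosS Φ t, a = b + c}

variable {Φ t}

lemma PosS_root {α : V} (hα : α ∈ PosS Φ t) : α ∈ Φ := hα.1
lemma PosS_pos {α : V} (hα : α ∈ PosS Φ t) : 0 < ⟪α, t⟫ := hα.2
lemma SDelta_pos {a : V} (ha : a ∈ SDelta Φ t) : a ∈ PosS Φ t := ha.1

variable (hzero : (0 : V) ∉ Φ)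
  (hrefl : ∀ α ∈ Φ, ∀ β ∈ Φ, β - (2 * ⟪α, β⟫ / ⟪α, α⟫) • α ∈ Φ)
  (hint : ∀ α ∈ Φ, ∀ β ∈ Φ, ∃ n : ℤ, 2 * ⟪α, β⟫ / ⟪β, β⟫ = (n : ℝ))
  (hreg : ∀ α ∈ Φ, ⟪α, t⟫ ≠ 0)

include hrefl hzero hreg in
lemma neg_PosS {α : V} (hα : α ∈ Φ) (hnp : α ∉ PosS Φ t) : -α ∈ PosS Φ t := by
  refine ⟨neg_mem hrefl hzero hα, ?_⟩
  rw [inner_neg_left]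
  rcases lt_trichotomy (⟪α, t⟫ : ℝ) 0 with hc | hc | hc
  · linarith
  · exact absurd hc (hreg α hα)
  · exact absurd ⟨hα, hc⟩ hnp

variable (P D : Finset V) (hP : (P : Set V) = PosS Φ t) (hD : (D : Set V) = SDelta Φ t)

include hP in
lemma memP {v : V} : v ∈ P ↔ v ∈ PosS Φ t := by
  rw [← hP]; exact Iff.rfl

include hD in
lemma memD {v : V} : v ∈ D ↔ v ∈ SDelta Φ t := by
  rw [← hD]; exact Iff.rfl

/-- the height measure used for induction -/
noncomputable def hmeas (P : Finset V) (t β : V) : ℕ :=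
  (P.filter (fun v => ⟪v, t⟫ < ⟪β, t⟫)).card

include hP in
lemma hmeas_lt {b β : V} (hb : b ∈ PosS Φ t) (hh : ⟪b, t⟫ < ⟪β, t⟫) :
    hmeas P t b < hmeas P t β := by
  apply Finset.card_lt_card
  constructor
  · intro v hv
    rw [Finset.mem_filter] at hv ⊢
    exact ⟨hv.1, lt_trans hv.2 hh⟩
  · intro hsub
    have hbP : b ∈ P := (memP P hP).mpr hb
    have : b ∈ P.filter (fun v => ⟪v, t⟫ < ⟪β, t⟫) := Finset.mem_filter.mpr ⟨hbP, hh⟩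
    have := hsub this
    rw [Finset.mem_filter] at this
    exact lt_irrefl _ this.2

include hP hD in
/-- every positive root is a nonnegative combination of simple roots -/
lemma decomp {β : V} (hβ : β ∈ PosS Φ t) :
    ∃ c : V → ℝ, (∀ v, 0 ≤ c v) ∧ β = ∑ v ∈ D, c v • v := by
  suffices H : ∀ n : ℕ, ∀ β, β ∈ PosS Φ t → hmeas P t β ≤ n →
      ∃ c : V → ℝ, (∀ v, 0 ≤ c v) ∧ β = ∑ v ∈ D, c v • v from
    H (hmeas P t β) β hβ le_rfl
  intro n
  induction n with
  | zero =>
    intro β hβ hm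
    by_cases hΔ : β ∈ SDelta Φ t
    · refine ⟨fun v => if v = β then 1 else 0, fun v => by positivity, ?_⟩
      rw [Finset.sum_eq_single β]
      · simp
      · intro v hv hne; simp [hne]
      · intro hβD; exact absurd ((memD D hD).mpr hΔ) hβD
    · exfalso
      have hdec : ∃ b ∈ PosS Φ t, ∃ c ∈ PosS Φ t, β = b + c := by
        by_contra hc; exact hΔ ⟨hβ, hc⟩
      obtain ⟨b, hb, c, hc, rfl⟩ := hdec
      have hhb : ⟪b, t⟫ < ⟪b + c, t⟫ := by
        rw [inner_add_left]; linarith [PosS_pos hc]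
      have := hmeas_lt P hP hb hhb
      omega
  | succ n ih =>
    intro β hβ hm
    by_cases hΔ : β ∈ SDelta Φ t
    · refine ⟨fun v => if v = β then 1 else 0, fun v => by positivity, ?_⟩
      rw [Finset.sum_eq_single β]
      · simp
      · intro v hv hne; simp [hne]
      · intro hβD; exact absurd ((memD D hD).mpr hΔ) hβD
    · have hdec : ∃ b ∈ PosS Φ t, ∃ c ∈ PosS Φ t, β = b + c := by
        by_contra hc; exact hΔ ⟨hβ, hc⟩
      obtain ⟨b, hb, c, hc, rfl⟩ := hdec
      have hhb : ⟪b, t⟫ < ⟪b + c, t⟫ := by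
        rw [inner_add_left]; linarith [PosS_pos hc]
      have hhc : ⟪c, t⟫ < ⟪b + c, t⟫ := by
        rw [inner_add_left]; linarith [PosS_pos hb]
      have hmb : hmeas P t b ≤ n := by
        have := hmeas_lt P hP hb hhb; omega
      have hmc : hmeas P t c ≤ n := by
        have := hmeas_lt P hP hc hhc; omega
      obtain ⟨cb, hcb, hcbeq⟩ := ih b hb hmb
      obtain ⟨cc, hcc, hcceq⟩ := ih c hc hmc
      refine ⟨fun v => cb v + cc v, fun v => add_nonneg (hcb v) (hcc v), ?_⟩
      rw [hcbeq, hcceq, ← Finset.sum_add_distrib]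
      congr 1
      funext v
      rw [add_smul]

include hzero hrefl hint hreg in
/-- distinct simple roots have nonpositive inner product -/
lemma simple_nonpos {a b : V} (ha : a ∈ SDelta Φ t) (hb : b ∈ SDelta Φ t)
    (hne : a ≠ b) : ⟪a, b⟫ ≤ 0 := by
  by_contra hcon
  push_neg at hcon
  have haΦ := PosS_root (SDelta_pos ha)
  have hbΦ := PosS_root (SDelta_pos hb)
  have hmem := sub_mem hzero hrefl hint haΦ hbΦ hcon hne
  by_cases hpos : a - b ∈ PosS Φ t
  · apply ha.2
    exact ⟨a - b, hpos, b, SDelta_pos hb, by abel⟩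
  · have := neg_PosS hzero hrefl hreg hmem hpos
    rw [neg_sub] at this
    apply hb.2
    exact ⟨b - a, this, a, SDelta_pos ha, by abel⟩

include hzero hrefl hint hreg hD in
/-- the simple roots are linearly independent (in the form we need) -/
lemma linind (c : V → ℝ) (hsum : ∑ v ∈ D, c v • v = 0) : ∀ v ∈ D, c v = 0 := by
  classical
  set Dp := D.filter (fun v => 0 < c v) with hDp
  set Dn := D.filter (fun v => c v < 0) with hDn
  have h1 : ∑ v ∈ D.filter (fun v => ¬ 0 < c v), c v • v = ∑ v ∈ Dn, c v • v := by
    refine (Finset.sum_subset ?_ ?_).symm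
    · intro v hv
      rw [Finset.mem_filter] at hv ⊢
      exact ⟨hv.1, not_lt.mpr (le_of_lt hv.2)⟩
    · intro v hv hvn
      rw [Finset.mem_filter] at hv
      have : c v = 0 := by
        by_contra hne
        have hlt : c v < 0 := lt_of_le_of_ne (not_lt.mp hv.2) hne
        exact hvn (Finset.mem_filter.mpr ⟨hv.1, hlt⟩)
      rw [this, zero_smul]
  have hsplit : ∑ v ∈ Dp, c v • v + ∑ v ∈ Dn, c v • v = 0 := by
    rw [← h1, hDp, Finset.sum_filter_add_sum_filter_not]; exact hsum
  have hz2 : ∑ v ∈ Dp, c v • v = ∑ v ∈ Dn, (-(c v)) • v := by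
    have h2 : ∑ v ∈ Dp, c v • v = -∑ v ∈ Dn, c v • v :=
      eq_neg_of_add_eq_zero_left hsplit
    rw [h2, ← Finset.sum_neg_distrib]
    exact Finset.sum_congr rfl (fun v _ => (neg_smul _ _).symm)
  have hzz : ⟪∑ v ∈ Dp, c v • v, ∑ v ∈ Dp, c v • v⟫ ≤ 0 := by
    nth_rewrite 2 [hz2]
    rw [sum_inner]
    apply Finset.sum_nonpos
    intro v hv
    rw [real_inner_smul_left, inner_sum]
    rw [hDp, Finset.mem_filter] at hv
    apply mul_nonpos_of_nonneg_of_nonpos (le_of_lt hv.2)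
    apply Finset.sum_nonpos
    intro u hu
    rw [hDn, Finset.mem_filter] at hu
    rw [real_inner_smul_right]
    have hvu : v ≠ u := by
      intro hc
      have := hv.2
      rw [hc] at this
      linarith [hu.2]
    have hvΔ : v ∈ SDelta Φ t := (memD D hD).mp hv.1
    have huΔ : u ∈ SDelta Φ t := (memD D hD).mp hu.1
    have hnn := simple_nonpos hzero hrefl hint hreg hvΔ huΔ hvu
    nlinarith [hu.2, hnn]
  have hz0 : ∑ v ∈ Dp, c v • v = 0 := by
    have h0 : (0:ℝ) ≤ ⟪∑ v ∈ Dp, c v • v, ∑ v ∈ Dp, c v • v⟫ := real_inner_self_nonneg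
    exact inner_self_eq_zero.mp (le_antisymm hzz h0)
  have hDpe : Dp = ∅ := by
    by_contra hne
    have hpos : 0 < ⟪∑ v ∈ Dp, c v • v, t⟫ := by
      rw [sum_inner]
      apply Finset.sum_pos
      · intro v hv
        rw [hDp, Finset.mem_filter] at hv
        rw [real_inner_smul_left]
        have hvΔ : v ∈ SDelta Φ t := (memD D hD).mp hv.1
        exact mul_pos hv.2 (PosS_pos (SDelta_pos hvΔ))
      · exact Finset.nonempty_of_ne_empty hne
    rw [hz0, inner_zero_left] at hpos
    exact lt_irrefl _ hpos
  have hDne : Dn = ∅ := by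
    by_contra hne
    have hpos : 0 < ⟪∑ v ∈ Dn, (-(c v)) • v, t⟫ := by
      rw [sum_inner]
      apply Finset.sum_pos
      · intro v hv
        rw [hDn, Finset.mem_filter] at hv
        rw [real_inner_smul_left]
        have hvΔ : v ∈ SDelta Φ t := (memD D hD).mp hv.1
        have := PosS_pos (SDelta_pos hvΔ)
        nlinarith [hv.2]
      · exact Finset.nonempty_of_ne_empty hne
    rw [← hz2, hz0, inner_zero_left] at hpos
    exact lt_irrefl _ hpos
  intro v hv
  by_contra hne
  rcases lt_or_gt_of_ne hne with hlt | hgt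
  · have : v ∈ Dn := Finset.mem_filter.mpr ⟨hv, hlt⟩
    rw [hDne] at this; exact absurd this (Finset.notMem_empty v)
  · have : v ∈ Dp := Finset.mem_filter.mpr ⟨hv, hgt⟩
    rw [hDpe] at this; exact absurd this (Finset.notMem_empty v)

include hzero hrefl hint hreg hP hD in
/-- a simple reflection maps positive roots not proportional to it to positive roots -/
lemma simple_refl_pos {a : V} (ha : a ∈ SDelta Φ t) {β : V} (hβ : β ∈ PosS Φ t)
    (hprop : ¬∃ c : ℝ, β = c • a) : E a β ∈ PosS Φ t := by
  have haΦ := PosS_root (SDelta_pos ha)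
  have haD : a ∈ D := (memD D hD).mpr ha
  have hEβΦ : E a β ∈ Φ := E_root_mem hrefl haΦ (PosS_root hβ)
  obtain ⟨c, hc0, hceq⟩ := decomp P D hP hD hβ
  -- some coefficient other than a is positive
  have hex : ∃ e ∈ D, e ≠ a ∧ 0 < c e := by
    by_contra hcon
    push_neg at hcon
    apply hprop
    refine ⟨c a, ?_⟩
    rw [hceq]
    rw [Finset.sum_eq_single a]
    · intro v hv hne
      have : c v = 0 := le_antisymm (hcon v hv hne) (hc0 v)
      rw [this, zero_smul]
    · intro hna; exact absurd haD hna
  obtain ⟨e, heD, hea, hce⟩ := hex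
  by_contra hEneg
  have hnegP : -(E a β) ∈ PosS Φ t := neg_PosS hzero hrefl hreg hEβΦ hEneg
  obtain ⟨d, hd0, hdeq⟩ := decomp P D hP hD hnegP
  -- linear relation
  set K := 2 * ⟪a, β⟫ / ⟪a, a⟫ with hK
  have hEa : E a β = β - K • a := rfl
  have hrel : ∑ v ∈ D, (c v + d v - (if v = a then K else 0)) • v = 0 := by
    have h1 : ∑ v ∈ D, (if v = a then K else 0) • v = K • a := by
      rw [Finset.sum_eq_single a]
      · simp
      · intro v hv hne; simp [hne]
      · intro hna; exact absurd haD hna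
    have hsplit : ∑ v ∈ D, (c v + d v - (if v = a then K else 0)) • v
        = (∑ v ∈ D, c v • v) + (∑ v ∈ D, d v • v)
          - (∑ v ∈ D, (if v = a then K else 0) • v) := by
      rw [← Finset.sum_add_distrib, ← Finset.sum_sub_distrib]
      exact Finset.sum_congr rfl (fun v _ => by rw [sub_smul, add_smul])
    rw [hsplit, ← hceq, ← hdeq, h1, hEa]
    abel
  have := linind hzero hrefl hint hreg D hD
    (fun v => c v + d v - (if v = a then K else 0)) hrel e heD
  simp only [if_neg hea] at this
  have := hd0 e
  linarith [hce]

include hzero hrefl hint hreg hP hD in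
/-- every reflection lies in the subgroup generated by simple reflections -/
lemma refl_in_simple {β : V} (hβ : β ∈ Φ) :
    E β ∈ Subgroup.closure {g : V ≃ₗ[ℝ] V | ∃ a ∈ SDelta Φ t, g = E a} := by
  suffices H : ∀ n : ℕ, ∀ β, β ∈ PosS Φ t → hmeas P t β ≤ n →
      E β ∈ Subgroup.closure {g : V ≃ₗ[ℝ] V | ∃ a ∈ SDelta Φ t, g = E a} by
    by_cases hpos : β ∈ PosS Φ t
    · exact H (hmeas P t β) β hpos le_rfl
    · have hneg : -β ∈ PosS Φ t := neg_PosS hzero hrefl hreg hβ hpos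
      have hEE : E (-β) = E β := by
        have hh : -β = (-1 : ℝ) • β := by rw [neg_smul, one_smul]
        rw [hh, E_smul (by norm_num : (-1:ℝ) ≠ 0)]
      rw [← hEE]
      exact H (hmeas P t (-β)) (-β) hneg le_rfl
  intro n
  induction n using Nat.strong_induction_on with
  | _ n ih =>
    intro β hβP hm
    have hβΦ := PosS_root hβP
    have hβz := root_ne_zero hzero hβΦ
    by_cases hprop : ∃ a ∈ SDelta Φ t, ∃ c : ℝ, β = c • a
    · obtain ⟨a, ha, c, rfl⟩ := hprop
      have hc : c ≠ 0 := by
        intro hc0; rw [hc0, zero_smul] at hβz; exact hβz rfl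
      rw [E_smul hc]
      exact Subgroup.subset_closure ⟨a, ha, rfl⟩
    · push_neg at hprop
      obtain ⟨c, hc0, hceq⟩ := decomp P D hP hD hβP
      have hδex : ∃ δ ∈ D, 0 < ⟪β, δ⟫ := by
        by_contra hcon
        push_neg at hcon
        have hββ : (0:ℝ) < ⟪β, β⟫ := inner_self_pos' hβz
        have hle : ⟪β, β⟫ ≤ 0 := by
          nth_rewrite 2 [hceq]
          rw [inner_sum]
          apply Finset.sum_nonpos
          intro v hv
          rw [real_inner_smul_right]
          exact mul_nonpos_of_nonneg_of_nonpos (hc0 v) (hcon v hv)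
        linarith
      obtain ⟨δ, hδD, hβδ⟩ := hδex
      have hδΔ : δ ∈ SDelta Φ t := (memD D hD).mp hδD
      have hδΦ := PosS_root (SDelta_pos hδΔ)
      have hδz := root_ne_zero hzero hδΦ
      have hprop' : ¬∃ c : ℝ, β = c • δ := fun ⟨c, hc⟩ => hprop δ hδΔ c hc
      have hβ'P : E δ β ∈ PosS Φ t :=
        simple_refl_pos hzero hrefl hint hreg P D hP hD hδΔ hβP hprop'
      have hht : ⟪E δ β, t⟫ < ⟪β, t⟫ := by
        rw [E_apply, inner_sub_left, real_inner_smul_left]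
        have h1 := PosS_pos (SDelta_pos hδΔ)
        have h2 : 0 < 2 * ⟪δ, β⟫ / ⟪δ, δ⟫ := by
          apply div_pos
          · rw [real_inner_comm]; linarith
          · exact inner_self_pos' hδz
        nlinarith
      have hmlt : hmeas P t (E δ β) < hmeas P t β := hmeas_lt P hP hβ'P hht
      have hIH := ih (hmeas P t (E δ β)) (lt_of_lt_of_le hmlt hm) (E δ β) hβ'P le_rfl
      have hconj : E β = E δ * E (E δ β) * E δ := by
        have hβeq : β = E δ (E δ β) := (rlin_invol δ β).symm
        calc E β = E (E δ (E δ β)) := by rw [← hβeq]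
        _ = E δ * E (E δ β) * (E δ)⁻¹ := E_conj (E δ) (E_inner δ) (E δ β)
        _ = E δ * E (E δ β) * E δ := by rw [E_inv]
      rw [hconj]
      have hgen : E δ ∈ Subgroup.closure {g : V ≃ₗ[ℝ] V | ∃ a ∈ SDelta Φ t, g = E a} :=
        Subgroup.subset_closure ⟨δ, hδΔ, rfl⟩
      exact Subgroup.mul_mem _ (Subgroup.mul_mem _ hgen hIH) hgen

include hzero hrefl in
lemma list_prod_W (l : List V) (hl : ∀ v ∈ l, v ∈ Φ) : (l.map E).prod ∈ WGrp Φ := by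
  apply Subgroup.list_prod_mem
  intro x hx
  rw [List.mem_map] at hx
  obtain ⟨v, hv, rfl⟩ := hx
  exact Subgroup.subset_closure (E_mem_genSet (hl v hv))

include hzero hrefl hint hreg hP hD in
/-- the exchange lemma -/
lemma exch (hfin : Φ.Finite) :
    ∀ l : List V, (∀ v ∈ l, v ∈ SDelta Φ t) → ∀ a ∈ SDelta Φ t,
      ((l.map E).prod) a ∉ PosS Φ t →
      ∃ l' : List V, (∀ v ∈ l', v ∈ SDelta Φ t) ∧ l'.length + 1 = l.length ∧
        (l'.map E).prod = (l.map E).prod * E a := by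
  intro l
  induction l with
  | nil =>
    intro _ a ha hnp
    exfalso
    exact hnp (by simpa using SDelta_pos ha)
  | cons b l ih =>
    intro hl a ha hnp
    have hbΔ : b ∈ SDelta Φ t := hl b List.mem_cons_self
    have hlΔ : ∀ v ∈ l, v ∈ SDelta Φ t := fun v hv => hl v (List.mem_cons_of_mem b hv)
    have hlΦ : ∀ v ∈ l, v ∈ Φ := fun v hv => PosS_root (SDelta_pos (hlΔ v hv))
    have huW : (l.map E).prod ∈ WGrp Φ := list_prod_W hzero hrefl l hlΦ
    have hprodcons : ((b :: l).map E).prod = E b * (l.map E).prod := by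
      rw [List.map_cons, List.prod_cons]
    by_cases hβ : (l.map E).prod a ∈ PosS Φ t
    · -- exchange happens here
      have hEb : E b ((l.map E).prod a) ∉ PosS Φ t := by
        intro hc
        apply hnp
        rw [hprodcons]
        exact hc
      have hex : ∃ c : ℝ, (l.map E).prod a = c • b := by
        by_contra hcon
        exact hEb (simple_refl_pos hzero hrefl hint hreg P D hP hD hbΔ hβ hcon)
      obtain ⟨c, hc⟩ := hex
      have hc0 : c ≠ 0 := by
        intro h0
        rw [h0, zero_smul] at hc
        exact root_ne_zero hzero (PosS_root hβ) hc
      have hEbeq : E b = (l.map E).prod * E a * ((l.map E).prod)⁻¹ := by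
        rw [show E b = E ((l.map E).prod a) by rw [hc, E_smul hc0]]
        exact E_conj _ (W_inner hfin hrefl huW) a
      refine ⟨l, hlΔ, by simp, ?_⟩
      rw [hprodcons, hEbeq]
      group
      rw [mul_assoc, E_mul_self, mul_one]
    · obtain ⟨l', hl'Δ, hl'len, hl'prod⟩ := ih hlΔ a ha hβ
      refine ⟨b :: l', fun v hv => ?_, by simp [← hl'len], ?_⟩
      · rcases List.mem_cons.mp hv with rfl | hv'
        · exact hbΔ
        · exact hl'Δ v hv'
      · rw [List.map_cons, List.prod_cons, hl'prod, hprodcons]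
        rw [mul_assoc]

include hzero hrefl hint hreg hP hD in
/-- key uniqueness: a Weyl element mapping an antidominant vector to an
antidominant vector fixes it -/
lemma uniq_aux (hfin : Φ.Finite) {x : V} (hx : ∀ α ∈ PosS Φ t, ⟪α, x⟫ ≤ 0) :
    ∀ n : ℕ, ∀ l : List V, l.length ≤ n → (∀ v ∈ l, v ∈ SDelta Φ t) →
      (∀ α ∈ PosS Φ t, ⟪α, (l.map E).prod x⟫ ≤ 0) → (l.map E).prod x = x := by
  intro n
  induction n using Nat.strong_induction_on with
  | _ n ih =>
    intro l hlen hlΔ hwx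
    rcases List.eq_nil_or_concat l with rfl | ⟨l₂, δ, rfl⟩
    · simp
    · have hδΔ : δ ∈ SDelta Φ t := hlΔ δ (by simp)
      have hδΦ : δ ∈ Φ := PosS_root (SDelta_pos hδΔ)
      have hl₂Δ : ∀ v ∈ l₂, v ∈ SDelta Φ t := fun v hv => hlΔ v (by simp [hv])
      have hl₂Φ : ∀ v ∈ l₂, v ∈ Φ := fun v hv => PosS_root (SDelta_pos (hl₂Δ v hv))
      have hlen' : l₂.length + 1 = (l₂.concat δ).length := by simp
      have hprodeq : ((l₂.concat δ).map E).prod = (l₂.map E).prod * E δ := by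
        rw [List.concat_eq_append, List.map_append, List.prod_append]
        simp
      have huW : (l₂.map E).prod ∈ WGrp Φ := list_prod_W hzero hrefl l₂ hl₂Φ
      by_cases hcase : (l₂.map E).prod δ ∈ PosS Φ t
      · -- last reflection fixes x
        have hwW : ((l₂.concat δ).map E).prod ∈ WGrp Φ :=
          list_prod_W hzero hrefl _ (fun v hv => PosS_root (SDelta_pos (hlΔ v hv)))
        have hwδ : ((l₂.concat δ).map E).prod δ = -((l₂.map E).prod δ) := by
          rw [hprodeq]
          show (l₂.map E).prod (E δ δ) = _
          rw [E_self δ (root_ne_zero hzero hδΦ), map_neg]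
        have h1 : ⟪((l₂.concat δ).map E).prod δ, ((l₂.concat δ).map E).prod x⟫
            = ⟪δ, x⟫ := W_inner hfin hrefl hwW δ x
        have h2 : ⟪(l₂.map E).prod δ, ((l₂.concat δ).map E).prod x⟫ ≤ 0 :=
          hwx _ hcase
        have h3 : ⟪δ, x⟫ ≤ 0 := hx δ (SDelta_pos hδΔ)
        have h4 : ⟪δ, x⟫ = 0 := by
          rw [← h1, hwδ, inner_neg_left] at h3 ⊢
          linarith
        have hfix : E δ x = x := E_fix h4
        have hred : ((l₂.concat δ).map E).prod x = (l₂.map E).prod x := by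
          rw [hprodeq]
          show (l₂.map E).prod (E δ x) = _
          rw [hfix]
        rw [hred] at hwx ⊢
        have hlen2 : l₂.length < n := by
          simp only [List.length_concat] at hlen; omega
        exact ih l₂.length hlen2 l₂ le_rfl hl₂Δ hwx
      · -- exchange: shorter word
        obtain ⟨l', hl'Δ, hl'len, hl'prod⟩ :=
          exch hzero hrefl hint hreg P D hP hD hfin l₂ hl₂Δ δ hδΔ hcase
        have hprod2 : (l'.map E).prod = ((l₂.concat δ).map E).prod := by
          rw [hl'prod, hprodeq]
        rw [← hprod2] at hwx ⊢
        have hlen2 : l'.length < n := by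
          simp only [List.length_concat] at hlen; omega
        exact ih l'.length hlen2 l' le_rfl hl'Δ hwx

lemma list_extract {S : Set V} :
    ∀ l : List (V ≃ₗ[ℝ] V), (∀ g ∈ l, ∃ a ∈ S, g = E a) →
      ∃ lv : List V, (∀ v ∈ lv, v ∈ S) ∧ lv.map E = l := by
  intro l
  induction l with
  | nil => exact fun _ => ⟨[], by simp, by simp⟩
  | cons g l ih =>
    intro hl
    obtain ⟨a, ha, rfl⟩ := hl g List.mem_cons_self
    obtain ⟨lv, hlv, hmap⟩ := ih (fun g' hg' => hl g' (List.mem_cons_of_mem _ hg'))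
    refine ⟨a :: lv, ?_, by simp [hmap]⟩
    intro v hv
    rcases List.mem_cons.mp hv with rfl | hv'
    · exact ha
    · exact hlv v hv'

include hzero hrefl hint hreg hP hD in
/-- a Weyl-group element mapping an antidominant vector to an antidominant
vector fixes it -/
lemma uniq (hfin : Φ.Finite) {w : V ≃ₗ[ℝ] V} (hw : w ∈ WGrp Φ) {x : V}
    (hx : ∀ α ∈ PosS Φ t, ⟪α, x⟫ ≤ 0) (hwx : ∀ α ∈ PosS Φ t, ⟪α, w x⟫ ≤ 0) :
    w x = x := by
  set S₀ : Set (V ≃ₗ[ℝ] V) := {g : V ≃ₗ[ℝ] V | ∃ a ∈ SDelta Φ t, g = E a} with hS₀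
  have hsub : WGrp Φ ≤ Subgroup.closure S₀ := by
    apply (Subgroup.closure_le _).mpr
    intro g hg
    obtain ⟨α, hα, rfl⟩ := genSet_eq hg
    exact refl_in_simple hzero hrefl hint hreg P D hP hD hα
  have hw' : w ∈ Subgroup.closure S₀ := hsub hw
  have hmono : w ∈ Submonoid.closure (S₀ ∪ S₀⁻¹) := by
    rw [← Subgroup.closure_toSubmonoid]
    exact hw'
  obtain ⟨l, hl, hlprod⟩ := Submonoid.exists_list_of_mem_closure hmono
  have hlS : ∀ g ∈ l, ∃ a ∈ SDelta Φ t, g = E a := by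
    intro g hg
    rcases hl g hg with hg' | hg'
    · exact hg'
    · rw [Set.mem_inv] at hg'
      obtain ⟨a, ha, hge⟩ := hg'
      refine ⟨a, ha, ?_⟩
      rw [← inv_inv g, hge, E_inv]
  obtain ⟨lv, hlv, hmap⟩ := list_extract l hlS
  have hprodx : (lv.map E).prod = w := by rw [hmap, hlprod]
  rw [← hprodx]
  apply uniq_aux hzero hrefl hint hreg P D hP hD hfin hx lv.length lv le_rfl hlv
  rw [hprodx]
  exact hwx

end PosSys

/-- existence of a regular vector -/
lemma exists_reg (s : Finset V) (hs : ∀ α ∈ s, α ≠ (0:V)) :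
    ∃ g : V, ∀ α ∈ s, ⟪α, g⟫ ≠ 0 := by
  classical
  induction s using Finset.induction_on with
  | empty => exact ⟨0, by simp⟩
  | insert a s' hnm ih =>
    obtain ⟨g, hg⟩ := ih (fun α hα => hs α (Finset.mem_insert_of_mem hα))
    have haz : a ≠ 0 := hs a (Finset.mem_insert_self a s')
    by_cases hag : ⟪a, g⟫ ≠ 0
    · refine ⟨g, fun α hα => ?_⟩
      rcases Finset.mem_insert.mp hα with rfl | hα'
      · exact hag
      · exact hg α hα'
    · push_neg at hag
      set bad : Finset ℝ :=
        insert 0 (s'.image (fun α => -⟪α, g⟫ / ⟪α, a⟫)) with hbad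
      obtain ⟨c, hc⟩ := Infinite.exists_notMem_finset bad
      have hc0 : c ≠ 0 := by
        intro h0; rw [h0] at hc; exact hc (Finset.mem_insert_self 0 _)
      refine ⟨g + c • a, fun α hα => ?_⟩
      rw [inner_add_right, real_inner_smul_right]
      rcases Finset.mem_insert.mp hα with rfl | hα'
      · rw [hag]
        have := inner_self_ne_zero' haz
        intro hcon
        apply this
        have : c * ⟪α, α⟫ = 0 := by linarith [hcon]
        rcases mul_eq_zero.mp this with h1 | h1
        · exact absurd h1 hc0
        · exact h1
      · by_cases hαa : ⟪α, a⟫ = 0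
        · rw [hαa, mul_zero, add_zero]
          exact hg α hα'
        · intro hcon
          apply hc
          apply Finset.mem_insert_of_mem
          rw [Finset.mem_image]
          refine ⟨α, hα', ?_⟩
          field_simp
          linarith [hcon]

section WGam

variable (hzero : (0 : V) ∉ Φ)
  (hrefl : ∀ α ∈ Φ, ∀ β ∈ Φ, β - (2 * ⟪α, β⟫ / ⟪α, α⟫) • α ∈ Φ)
  (hint : ∀ α ∈ Φ, ∀ β ∈ Φ, ∃ n : ℤ, 2 * ⟪α, β⟫ / ⟪β, β⟫ = (n : ℝ))
  (h : V) (heuler : ∀ α ∈ Φ, ⟪α, h⟫ ∈ ({-1, 0, 1} : Set ℝ))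
  {r : ℕ} (γ : Fin r → V)
  (hγroot : ∀ j, γ j ∈ Φ) (hγgrade : ∀ j, ⟪γ j, h⟫ = 1)
  (hγinj : Function.Injective γ)
  (hγso : ∀ i j, i ≠ j → γ i + γ j ∉ Φ ∧ γ i - γ j ∉ Φ)

include hzero hrefl hint heuler hγroot hγgrade hγinj hγso in
lemma inner_gam_listsum (j : Fin r) :
    ∀ l : List (Fin r), j ∉ l →
      ⟪γ j, (l.map (fun i => (2 / ⟪γ i, γ i⟫) • γ i)).sum⟫ = 0 := by
  intro l
  induction l with
  | nil => intro _; simp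
  | cons i l ih =>
    intro hj
    have hji : j ≠ i := fun hc => hj (hc ▸ (List.mem_cons_self : i ∈ i :: l))
    have hnotl : j ∉ l := fun hc => hj (List.mem_cons_of_mem i hc)
    rw [List.map_cons, List.sum_cons, inner_add_right, ih hnotl,
      real_inner_smul_right,
      gam_orth hzero hrefl hint h heuler γ hγroot hγgrade hγinj hγso hji]
    ring

include hzero hrefl hint heuler hγroot hγgrade hγinj hγso in
lemma wGamma_apply :
    ∀ l : List (Fin r), l.Nodup →
      ((l.map (fun j => E (γ j))).prod) h
        = h - (l.map (fun j => (2 / ⟪γ j, γ j⟫) • γ j)).sum := by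
  intro l
  induction l with
  | nil => intro _; simp
  | cons j l ih =>
    intro hnd
    have hnd' := (List.nodup_cons.mp hnd).2
    have hjl := (List.nodup_cons.mp hnd).1
    rw [List.map_cons, List.prod_cons, List.map_cons, List.sum_cons]
    have happ : (E (γ j) * (l.map (fun j => E (γ j))).prod) h
        = E (γ j) ((l.map (fun j => E (γ j))).prod h) := rfl
    rw [happ, ih hnd', E_apply]
    have hin : ⟪γ j, h - (l.map (fun i => (2 / ⟪γ i, γ i⟫) • γ i)).sum⟫ = 1 := by
      rw [inner_sub_right, hγgrade j,
        inner_gam_listsum hzero hrefl hint h heuler γ hγroot hγgrade hγinj hγso j l hjl]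
      ring
    rw [hin]
    have hA := inner_self_ne_zero' (root_ne_zero hzero (hγroot j))
    have hco : 2 * (1:ℝ) / ⟪γ j, γ j⟫ = 2 / ⟪γ j, γ j⟫ := by ring
    rw [hco]
    abel

end WGam

end RS
end EulerStmt10

open EulerStmt10 in
/-- Let `Σ` be an irreducible root system (in a Euclidean
space `V`, roots pairing with coweights via the inner product) with a 3-grading
defined by an Euler element `h` (so `⟪α, h⟫ ∈ {-1,0,1}` for all roots `α`), let
`Γ = {γ₁, …, γ_r} ⊆ Σ₁` be a maximal set of long strongly orthogonal roots,
and set `h_s = (1/2)·∑_j γ_j^∨` where `γ^∨ = (2/⟪γ,γ⟫)·γ` is the coroot.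
Then `h` is symmetric (i.e. `-h` lies in the Weyl group orbit of `h`) if and
only if `h = h_s`. -/
theorem euler_element_symmetric_iff_half_sum_of_coroots
    (V : Type*) [NormedAddCommGroup V] [InnerProductSpace ℝ V]
    [FiniteDimensional ℝ V]
    (Φ : Set V) (hfin : Φ.Finite) (hzero : (0 : V) ∉ Φ)
    (hspan : Submodule.span ℝ Φ = ⊤)
    (hrefl : ∀ α ∈ Φ, ∀ β ∈ Φ, β - (2 * ⟪α, β⟫ / ⟪α, α⟫) • α ∈ Φ)
    (hint : ∀ α ∈ Φ, ∀ β ∈ Φ, ∃ n : ℤ, 2 * ⟪α, β⟫ / ⟪β, β⟫ = (n : ℝ))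
    (hirr : ∀ Φ₁ Φ₂ : Set V, Φ₁ ∪ Φ₂ = Φ → Φ₁ ∩ Φ₂ = ∅ →
      (∀ a ∈ Φ₁, ∀ b ∈ Φ₂, ⟪a, b⟫ = 0) → Φ₁ = ∅ ∨ Φ₂ = ∅)
    -- the Euler element `h`
    (h : V) (heuler : ∀ α ∈ Φ, ⟪α, h⟫ ∈ ({-1, 0, 1} : Set ℝ))
    (hne : ∃ α ∈ Φ, ⟪α, h⟫ = 1)
    -- the maximal system `Γ = {γ 0, …, γ (r-1)} ⊆ Σ₁` of long strongly
    -- orthogonal roots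
    (r : ℕ) (γ : Fin r → V) (hγinj : Function.Injective γ)
    (hγroot : ∀ j, γ j ∈ Φ) (hγgrade : ∀ j, ⟪γ j, h⟫ = 1)
    (hγlong : ∀ j, ∀ α ∈ Φ, ‖α‖ ≤ ‖γ j‖)
    (hγso : ∀ i j, i ≠ j → γ i + γ j ∉ Φ ∧ γ i - γ j ∉ Φ)
    (hγmax : ∀ β ∈ Φ, ⟪β, h⟫ = 1 → (∀ α ∈ Φ, ‖α‖ ≤ ‖β‖) →
      (∀ j, β + γ j ∉ Φ ∧ β - γ j ∉ Φ) → ∃ j, β = γ j) :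
    (∃ w ∈ Subgroup.closure
        {w : V ≃ₗ[ℝ] V | ∃ α ∈ Φ, ∀ x, w x = x - (2 * ⟪α, x⟫ / ⟪α, α⟫) • α},
      w h = -h)
    ↔ h = (1 / 2 : ℝ) • ∑ j, (2 / ⟪γ j, γ j⟫) • γ j := by
  classical
  set S : V := ∑ j, (2 / ⟪γ j, γ j⟫) • γ j with hSdef
  -- the element w_Γ
  set wΓ : V ≃ₗ[ℝ] V := ((List.finRange r).map (fun j => E (γ j))).prod with hwΓdef
  have hlistsum : ((List.finRange r).map (fun j => (2 / ⟪γ j, γ j⟫) • γ j)).sum = S := by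
    rw [hSdef, Fin.sum_univ_def]
  have hwΓh : wΓ h = h - S := by
    rw [hwΓdef, wGamma_apply hzero hrefl hint h heuler γ hγroot hγgrade hγinj hγso
      (List.finRange r) (List.nodup_finRange r), hlistsum]
  have hwΓW : wΓ ∈ WGrp Φ := by
    rw [hwΓdef]
    have hmm : (List.finRange r).map (fun j => E (γ j))
        = ((List.finRange r).map γ).map E := by
      rw [List.map_map]
      rfl
    rw [hmm]
    apply list_prod_W hzero hrefl
    intro v hv
    rw [List.mem_map] at hv
    obtain ⟨j, _, rfl⟩ := hv
    exact hγroot j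
  constructor
  · -- hard direction
    rintro ⟨w, hw, hwh⟩
    have hwW : w ∈ WGrp Φ := hw
    -- regular vector g
    obtain ⟨g, hg⟩ := exists_reg hfin.toFinset
      (fun α hα => root_ne_zero hzero (hfin.mem_toFinset.mp hα))
    have hgΦ : ∀ α ∈ Φ, ⟪α, g⟫ ≠ 0 := fun α hα => hg α (hfin.mem_toFinset.mpr hα)
    -- the constants
    set R : ℝ := 1 + ∑ α ∈ hfin.toFinset, (|⟪α, S⟫| + |⟪α, g⟫|) with hRdef
    have hR1 : ∀ α ∈ Φ, |⟪α, S⟫| + |⟪α, g⟫| ≤ R - 1 := by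
      intro α hα
      have hmem : α ∈ hfin.toFinset := hfin.mem_toFinset.mpr hα
      have hnn : ∀ b ∈ hfin.toFinset, (0:ℝ) ≤ |⟪b, S⟫| + |⟪b, g⟫| :=
        fun b _ => by positivity
      have := Finset.single_le_sum hnn hmem
      rw [hRdef]; linarith
    set Q : Finset V := hfin.toFinset.filter (fun α => ⟪α, h⟫ = 0 ∧ ⟪α, S⟫ ≠ 0) with hQdef
    set f : V → ℝ := fun α => |⟪α, S⟫| / (1 + |⟪α, g⟫|) with hfdef
    set ε : ℝ := if hQ : (Q.image f).Nonempty then min 1 ((Q.image f).min' hQ) else 1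
      with hεdef
    have hfpos : ∀ α ∈ Q, 0 < f α := by
      intro α hα
      rw [hQdef, Finset.mem_filter] at hα
      rw [hfdef]
      exact div_pos (abs_pos.mpr hα.2.2) (by positivity)
    have hε0 : 0 < ε := by
      rw [hεdef]
      split_ifs with hQne
      · apply lt_min one_pos
        have hm := Finset.min'_mem (Q.image f) hQne
        rw [Finset.mem_image] at hm
        obtain ⟨α, hαQ, hα⟩ := hm
        rw [← hα]
        exact hfpos α hαQ
      · exact one_pos
    have hε1 : ε ≤ 1 := by
      rw [hεdef]
      split_ifs with hQne
      · exact min_le_left _ _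
      · exact le_refl 1
    have hεb : ∀ α ∈ Φ, ⟪α, h⟫ = 0 → ⟪α, S⟫ ≠ 0 → ε * |⟪α, g⟫| < |⟪α, S⟫| := by
      intro α hα h0 hSne
      have hαQ : α ∈ Q := by
        rw [hQdef, Finset.mem_filter]
        exact ⟨hfin.mem_toFinset.mpr hα, h0, hSne⟩
      have hfmem : f α ∈ Q.image f := Finset.mem_image_of_mem f hαQ
      have hQne : (Q.image f).Nonempty := ⟨f α, hfmem⟩
      have hεle : ε ≤ f α := by
        rw [hεdef, dif_pos hQne]
        exact le_trans (min_le_right _ _) (Finset.min'_le _ _ hfmem)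
      have hd : (0:ℝ) < 1 + |⟪α, g⟫| := by positivity
      have hf0 : 0 < f α := hfpos α hαQ
      have hfull : f α * (1 + |⟪α, g⟫|) = |⟪α, S⟫| := by
        rw [hfdef]
        field_simp
      calc ε * |⟪α, g⟫| ≤ f α * |⟪α, g⟫| :=
            mul_le_mul_of_nonneg_right hεle (abs_nonneg _)
      _ < f α * (1 + |⟪α, g⟫|) := by nlinarith [hf0]
      _ = |⟪α, S⟫| := hfull
    set t : V := R • h + S + ε • g with htdef
    have hip : ∀ α : V, ⟪α, t⟫ = R * ⟪α, h⟫ + ⟪α, S⟫ + ε * ⟪α, g⟫ := by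
      intro α
      rw [htdef, inner_add_right, inner_add_right, real_inner_smul_right,
        real_inner_smul_right]
    -- bounds on the ε g term
    have hεg : ∀ α : V, |ε * ⟪α, g⟫| ≤ |⟪α, g⟫| := by
      intro α
      rw [abs_mul, abs_of_pos hε0]
      nlinarith [abs_nonneg (⟪α, g⟫ : ℝ)]
    have s1 : ∀ α ∈ Φ, ⟪α, h⟫ = 1 → 0 < ⟪α, t⟫ := by
      intro α hα h1
      have hb := hR1 α hα
      have h2 := hεg α
      have h3 := abs_le.mp h2
      have h4 := neg_abs_le (⟪α, S⟫ : ℝ)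
      rw [hip α, h1]
      linarith
    have sm1 : ∀ α ∈ Φ, ⟪α, h⟫ = -1 → ⟪α, t⟫ < 0 := by
      intro α hα h1
      have hb := hR1 α hα
      have h2 := hεg α
      have h3 := abs_le.mp h2
      have h4 := le_abs_self (⟪α, S⟫ : ℝ)
      rw [hip α, h1]
      linarith
    have s0p : ∀ α ∈ Φ, ⟪α, h⟫ = 0 → 0 < ⟪α, S⟫ → 0 < ⟪α, t⟫ := by
      intro α hα h0 hS
      have h2 := hεb α hα h0 (ne_of_gt hS)
      have h3 := abs_le.mp (le_refl |ε * ⟪α, g⟫|)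
      have h5 : -(ε * |⟪α, g⟫|) ≤ ε * ⟪α, g⟫ := by
        have := neg_abs_le (ε * ⟪α, g⟫ : ℝ)
        rw [abs_mul, abs_of_pos hε0] at this
        linarith
      rw [hip α, h0]
      rw [abs_of_pos hS] at h2
      linarith
    have s0n : ∀ α ∈ Φ, ⟪α, h⟫ = 0 → ⟪α, S⟫ < 0 → ⟪α, t⟫ < 0 := by
      intro α hα h0 hS
      have h2 := hεb α hα h0 (ne_of_lt hS)
      have h5 : ε * ⟪α, g⟫ ≤ ε * |⟪α, g⟫| := by
        have := le_abs_self (ε * ⟪α, g⟫ : ℝ)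
        rw [abs_mul, abs_of_pos hε0] at this
        linarith
      rw [hip α, h0]
      rw [abs_of_neg hS] at h2
      linarith
    have s00 : ∀ α ∈ Φ, ⟪α, h⟫ = 0 → ⟪α, S⟫ = 0 → ⟪α, t⟫ ≠ 0 := by
      intro α hα h0 hS
      rw [hip α, h0, hS]
      have := hgΦ α hα
      intro hcon
      apply this
      have : ε * ⟪α, g⟫ = 0 := by linarith
      rcases mul_eq_zero.mp this with h1 | h1
      · exact absurd h1 (ne_of_gt hε0)
      · exact h1
    have hreg : ∀ α ∈ Φ, ⟪α, t⟫ ≠ 0 := by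
      intro α hα
      have := heuler α hα
      simp only [Set.mem_insert_iff, Set.mem_singleton_iff] at this
      rcases this with h1 | h1 | h1
      · exact ne_of_lt (sm1 α hα h1)
      · rcases lt_trichotomy (⟪α, S⟫ : ℝ) 0 with hS | hS | hS
        · exact ne_of_lt (s0n α hα h1 hS)
        · exact s00 α hα h1 hS
        · exact ne_of_gt (s0p α hα h1 hS)
      · exact ne_of_gt (s1 α hα h1)
    -- finsets for positive and simple roots
    have hPosfin : (PosS Φ t).Finite := hfin.subset (fun x hx => hx.1)
    have hDelfin : (SDelta Φ t).Finite :=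
      hfin.subset (fun x hx => (SDelta_pos hx).1)
    set P : Finset V := hPosfin.toFinset with hPdef
    set D : Finset V := hDelfin.toFinset with hDdef
    have hP : (P : Set V) = PosS Φ t := hPosfin.coe_toFinset
    have hD : (D : Set V) = SDelta Φ t := hDelfin.coe_toFinset
    -- antidominance of h - S
    have hxanti : ∀ α ∈ PosS Φ t, ⟪α, h - S⟫ ≤ 0 := by
      rintro α ⟨hαΦ, hαt⟩
      have := heuler α hαΦ
      simp only [Set.mem_insert_iff, Set.mem_singleton_iff] at this
      rcases this with h1 | h1 | h1
      · exact absurd hαt (not_lt.mpr (le_of_lt (sm1 α hαΦ h1)))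
      · rw [inner_sub_right, h1]
        have hSnn : 0 ≤ ⟪α, S⟫ := by
          by_contra hcon
          push_neg at hcon
          exact absurd hαt (not_lt.mpr (le_of_lt (s0n α hαΦ h1 hcon)))
        linarith
      · rw [inner_sub_right, h1]
        -- need ⟪α, S⟫ ≥ 1
        have hterm : ∀ j, ⟪α, (2 / ⟪γ j, γ j⟫) • γ j⟫ = 2 * ⟪α, γ j⟫ / ⟪γ j, γ j⟫ := by
          intro j
          rw [real_inner_smul_right]
          ring
        have hSsum : ⟪α, S⟫ = ∑ j, 2 * ⟪α, γ j⟫ / ⟪γ j, γ j⟫ := by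
          rw [hSdef, inner_sum]
          exact Finset.sum_congr rfl (fun j _ => hterm j)
        have hnonneg : ∀ j, 0 ≤ 2 * ⟪α, γ j⟫ / ⟪γ j, γ j⟫ := by
          intro j
          apply div_nonneg
          · have := grade1_nonneg hzero hrefl hint h heuler γ hγroot hγgrade hαΦ h1 j
            linarith
          · exact le_of_lt (inner_self_pos' (root_ne_zero hzero (hγroot j)))
        obtain ⟨j0, hj0⟩ := hard_lemma hzero hrefl hint h heuler γ hγroot hγgrade
          hfin hspan hirr hγmax hαΦ h1
        have hj0ge : 1 ≤ 2 * ⟪α, γ j0⟫ / ⟪γ j0, γ j0⟫ := by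
          obtain ⟨n, hn⟩ := hint α hαΦ (γ j0) (hγroot j0)
          have hpos : 0 < 2 * ⟪α, γ j0⟫ / ⟪γ j0, γ j0⟫ :=
            div_pos (by linarith) (inner_self_pos' (root_ne_zero hzero (hγroot j0)))
          rw [hn] at hpos ⊢
          exact_mod_cast (by exact_mod_cast hpos : (0:ℤ) < n)
        have hsumge : 1 ≤ ⟪α, S⟫ := by
          rw [hSsum]
          calc (1:ℝ) ≤ 2 * ⟪α, γ j0⟫ / ⟪γ j0, γ j0⟫ := hj0ge
          _ ≤ ∑ j, 2 * ⟪α, γ j⟫ / ⟪γ j, γ j⟫ :=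
              Finset.single_le_sum (fun j _ => hnonneg j) (Finset.mem_univ j0)
        linarith
    have hmanti : ∀ α ∈ PosS Φ t, ⟪α, -h⟫ ≤ 0 := by
      rintro α ⟨hαΦ, hαt⟩
      have := heuler α hαΦ
      simp only [Set.mem_insert_iff, Set.mem_singleton_iff] at this
      rw [inner_neg_right]
      rcases this with h1 | h1 | h1
      · exact absurd hαt (not_lt.mpr (le_of_lt (sm1 α hαΦ h1)))
      · rw [h1]; norm_num
      · rw [h1]; norm_num
    -- the element u
    set u : V ≃ₗ[ℝ] V := w * wΓ⁻¹ with hudef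
    have huW : u ∈ WGrp Φ := Subgroup.mul_mem _ hwW (Subgroup.inv_mem _ hwΓW)
    have hux : u (h - S) = -h := by
      have h2 : wΓ⁻¹ (h - S) = h := by
        rw [← hwΓh]
        exact wΓ.symm_apply_apply h
      show w (wΓ⁻¹ (h - S)) = -h
      rw [h2, hwh]
    have huanti : ∀ α ∈ PosS Φ t, ⟪α, u (h - S)⟫ ≤ 0 := by
      intro α hα
      rw [hux]
      exact hmanti α hα
    have hfix := uniq hzero hrefl hint hreg P D hP hD hfin huW hxanti huanti
    rw [hux] at hfix
    -- -h = h - S  ⇒  h = (1/2) • S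
    have h6 : -h + S = h := eq_sub_iff_add_eq.mp hfix
    have h7 : S = (2:ℝ) • h := by
      calc S = (-h + S) + h := by abel
      _ = h + h := by rw [h6]
      _ = (2:ℝ) • h := (two_smul ℝ h).symm
    rw [h7, smul_smul]
    norm_num
  · -- easy direction
    intro hhs
    refine ⟨wΓ, hwΓW, ?_⟩
    have h7 : (2:ℝ) • h = S := by
      rw [hhs, smul_smul]
      norm_num
    rw [hwΓh, ← h7, two_smul]
    abel
end

section
/- Let Σ be a 3-graded irreducible root system with Euler element h and Γ = {γ₁,…,γ_r} ⊆ Σ₁ a maximal set of long strongly orthogonal roots, and write pr_Γ(α) = Σ_j (α(γ_j^∨)/2)γ_j for the orthogonal projection to span(Γ). If the sets P_j = Σ₁ ∩ pr_Γ^{-1}(γ_j/2) and C_j = Σ₀ ∩ pr_Γ^{-1}(γ_j/2) are all empty, then h = (1/2)Σ_j γ_j^∨ and α(h) = −α(h') for all α ∈ Σ, where h' = s_{γ₁}⋯s_{γ_r}(h). -/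
open scoped RealInnerProductSpace

section Aux
variable {V : Type*} [NormedAddCommGroup V] [InnerProductSpace ℝ V]

lemma aux_span_inner (S : Set V) {x : V} (hx : ∀ a ∈ S, ⟪a, x⟫ = 0) :
    ∀ y ∈ Submodule.span ℝ S, ⟪y, x⟫ = 0 := by
  intro y hy
  induction hy using Submodule.span_induction with
  | mem a haS => exact hx a haS
  | zero => simp
  | add a b _ _ iha ihb => rw [inner_add_left, iha, ihb]; ring
  | smul c a _ iha => rw [real_inner_smul_left, iha]; ring

lemma aux_orth_zero (S : Set V) (hS : Submodule.span ℝ S = ⊤)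
    {x : V} (hx : ∀ a ∈ S, ⟪a, x⟫ = 0) : x = 0 :=
  inner_self_eq_zero.mp (aux_span_inner S hx x (by rw [hS]; trivial))

lemma aux_neg_mem (Φ : Set V) (hzero : (0:V) ∉ Φ)
    (hrefl : ∀ α ∈ Φ, ∀ β ∈ Φ, β - (2 * ⟪α, β⟫ / ⟪α, α⟫) • α ∈ Φ)
    {a : V} (ha : a ∈ Φ) : -a ∈ Φ := by
  have ha0 : a ≠ 0 := fun h => hzero (h ▸ ha)
  have hq : ⟪a, a⟫ ≠ 0 := inner_self_ne_zero.mpr ha0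
  have := hrefl a ha a ha
  have e : a - (2 * ⟪a, a⟫ / ⟪a, a⟫) • a = -a := by
    rw [mul_div_assoc, div_self hq, mul_one]
    module
  rwa [e] at this

lemma aux_sum (Φ : Set V) (hzero : (0:V) ∉ Φ)
    (hrefl : ∀ α ∈ Φ, ∀ β ∈ Φ, β - (2 * ⟪α, β⟫ / ⟪α, α⟫) • α ∈ Φ)
    (hint : ∀ α ∈ Φ, ∀ β ∈ Φ, ∃ n : ℤ, 2 * ⟪α, β⟫ / ⟪β, β⟫ = (n : ℝ))
    {a b : V} (ha : a ∈ Φ) (hb : b ∈ Φ) (hab : ⟪a, b⟫ < 0) (hne : a + b ≠ 0) :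
    a + b ∈ Φ := by
  have ha0 : a ≠ 0 := fun h => hzero (h ▸ ha)
  have hb0 : b ≠ 0 := fun h => hzero (h ▸ hb)
  have hqa : (0:ℝ) < ⟪a, a⟫ :=
    lt_of_le_of_ne real_inner_self_nonneg (Ne.symm (inner_self_ne_zero.mpr ha0))
  have hqb : (0:ℝ) < ⟪b, b⟫ :=
    lt_of_le_of_ne real_inner_self_nonneg (Ne.symm (inner_self_ne_zero.mpr hb0))
  obtain ⟨m, hm⟩ := hint b hb a ha
  obtain ⟨n, hn⟩ := hint a ha b hb
  have hba : ⟪b, a⟫ = ⟪a, b⟫ := real_inner_comm a b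
  have hmneg : (m:ℝ) < 0 := by
    rw [← hm, hba]; exact div_neg_of_neg_of_pos (by linarith) hqa
  have hnneg : (n:ℝ) < 0 := by
    rw [← hn]; exact div_neg_of_neg_of_pos (by linarith) hqb
  have hm1 : m ≤ -1 := by have : m < 0 := by exact_mod_cast hmneg
                          omega
  have hn1 : n ≤ -1 := by have : n < 0 := by exact_mod_cast hnneg
                          omega
  rcases eq_or_lt_of_le hn1 with hn2 | hn2
  · have := hrefl b hb a ha
    have e : a - (2 * ⟪b, a⟫ / ⟪b, b⟫) • b = a + b := by
      rw [hba, hn, hn2]; push_cast; module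
    rwa [e] at this
  rcases eq_or_lt_of_le hm1 with hm2 | hm2
  · have := hrefl a ha b hb
    have e : b - (2 * ⟪a, b⟫ / ⟪a, a⟫) • a = a + b := by
      rw [← hba, hm, hm2]; push_cast; module
    rwa [e] at this
  have hm2' : m ≤ -2 := by omega
  have hn2' : n ≤ -2 := by omega
  have hCS : ⟪a, b⟫ * ⟪a, b⟫ ≤ ⟪a, a⟫ * ⟪b, b⟫ := real_inner_mul_inner_self_le a b
  have hmn : (m:ℝ) * n ≤ 4 := by
    rw [← hm, ← hn, hba]
    rw [div_mul_div_comm]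
    rw [div_le_iff₀ (by positivity)]
    nlinarith
  have hmnZ : (m * n : ℤ) ≤ 4 := by exact_mod_cast hmn
  have hm4 : m = -2 ∧ n = -2 := by
    constructor
    · by_contra hc
      have hm3 : m ≤ -3 := by omega
      have : (6:ℤ) ≤ m * n := by nlinarith
      omega
    · by_contra hc
      have hn3 : n ≤ -3 := by omega
      have : (6:ℤ) ≤ m * n := by nlinarith
      omega
  have hab1 : 2 * ⟪a, b⟫ = -2 * ⟪a, a⟫ := by
    have := hm; rw [hm4.1, hba] at this; push_cast at this
    field_simp at this; linarith
  have hab2 : 2 * ⟪a, b⟫ = -2 * ⟪b, b⟫ := by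
    have := hn; rw [hm4.2] at this; push_cast at this
    field_simp at this; linarith
  exfalso
  apply hne
  rw [← inner_self_eq_zero (𝕜 := ℝ)]
  have : ⟪a + b, a + b⟫ = ⟪a,a⟫ + 2*⟪a,b⟫ + ⟪b,b⟫ := by
    rw [inner_add_add_self, hba]; ring
  rw [this]; linarith

lemma aux_diff (Φ : Set V) (hzero : (0:V) ∉ Φ)
    (hrefl : ∀ α ∈ Φ, ∀ β ∈ Φ, β - (2 * ⟪α, β⟫ / ⟪α, α⟫) • α ∈ Φ)
    (hint : ∀ α ∈ Φ, ∀ β ∈ Φ, ∃ n : ℤ, 2 * ⟪α, β⟫ / ⟪β, β⟫ = (n : ℝ))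
    {a b : V} (ha : a ∈ Φ) (hb : b ∈ Φ) (hab : 0 < ⟪a, b⟫) (hne : a ≠ b) :
    a - b ∈ Φ := by
  have hnb : -b ∈ Φ := aux_neg_mem Φ hzero hrefl hb
  have : a + -b ∈ Φ := by
    apply aux_sum Φ hzero hrefl hint ha hnb
    · rw [inner_neg_right]; linarith
    · intro hc; apply hne; rw [← sub_eq_zero]; rw [← sub_eq_add_neg] at hc; exact hc
  rwa [← sub_eq_add_neg] at this

end Aux

/-- Let `Σ` (here `Φ`) be a 3-graded irreducible root system
with Euler element `h` and `Γ = {γ₁, …, γ_r} ⊆ Σ₁` a maximal set of long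
strongly orthogonal roots, and write `pr_Γ(α) = ∑_j (α(γ_j^∨)/2) γ_j`
(the orthogonal projection onto `span Γ`).  If the sets
`P_j = Σ₁ ∩ pr_Γ⁻¹(γ_j/2)` and `C_j = Σ₀ ∩ pr_Γ⁻¹(γ_j/2)` are all empty, then
`h = (1/2)·∑_j γ_j^∨` and `α(h) = -α(h')` for all `α ∈ Σ`, where
`h' = s_{γ₁} ⋯ s_{γ_r}(h)` is the image of `h` under the product of the
(commuting) reflections in the roots `γ_j`. -/
theorem harish_chandra_empty_Pj_Cj
    (V : Type*) [NormedAddCommGroup V] [InnerProductSpace ℝ V]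
    [FiniteDimensional ℝ V]
    (Φ : Set V) (hfin : Φ.Finite) (hzero : (0 : V) ∉ Φ)
    (hspan : Submodule.span ℝ Φ = ⊤)
    (hrefl : ∀ α ∈ Φ, ∀ β ∈ Φ, β - (2 * ⟪α, β⟫ / ⟪α, α⟫) • α ∈ Φ)
    (hint : ∀ α ∈ Φ, ∀ β ∈ Φ, ∃ n : ℤ, 2 * ⟪α, β⟫ / ⟪β, β⟫ = (n : ℝ))
    (hirr : ∀ Φ₁ Φ₂ : Set V, Φ₁ ∪ Φ₂ = Φ → Φ₁ ∩ Φ₂ = ∅ →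
      (∀ a ∈ Φ₁, ∀ b ∈ Φ₂, ⟪a, b⟫ = 0) → Φ₁ = ∅ ∨ Φ₂ = ∅)
    -- the Euler element `h`
    (h : V) (heuler : ∀ α ∈ Φ, ⟪α, h⟫ ∈ ({-1, 0, 1} : Set ℝ))
    (hne : ∃ α ∈ Φ, ⟪α, h⟫ = 1)
    -- the maximal system `Γ` of long strongly orthogonal roots in `Σ₁`
    (r : ℕ) (γ : Fin r → V) (hγinj : Function.Injective γ)
    (hγroot : ∀ j, γ j ∈ Φ) (hγgrade : ∀ j, ⟪γ j, h⟫ = 1)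
    (hγlong : ∀ j, ∀ α ∈ Φ, ‖α‖ ≤ ‖γ j‖)
    (hγso : ∀ i j, i ≠ j → γ i + γ j ∉ Φ ∧ γ i - γ j ∉ Φ)
    (hγmax : ∀ β ∈ Φ, ⟪β, h⟫ = 1 → (∀ α ∈ Φ, ‖α‖ ≤ ‖β‖) →
      (∀ j, β + γ j ∉ Φ ∧ β - γ j ∉ Φ) → ∃ j, β = γ j)
    -- the sets `P_j` and `C_j` are empty, where `pr_Γ` is the orthogonal
    -- projection onto the span of `Γ`
    (hP : ∀ j, ¬∃ α ∈ Φ, ⟪α, h⟫ = 1 ∧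
      (∑ i, (⟪γ i, α⟫ / ⟪γ i, γ i⟫) • γ i) = (1 / 2 : ℝ) • γ j)
    (hC : ∀ j, ¬∃ α ∈ Φ, ⟪α, h⟫ = 0 ∧
      (∑ i, (⟪γ i, α⟫ / ⟪γ i, γ i⟫) • γ i) = (1 / 2 : ℝ) • γ j) :
    h = (1 / 2 : ℝ) • ∑ j, (2 / ⟪γ j, γ j⟫) • γ j ∧
    ∀ α ∈ Φ, ⟪α, h⟫ =
      -⟪α, ((List.ofFn fun j : Fin r =>
          (fun x : V => x - (2 * ⟪γ j, x⟫ / ⟪γ j, γ j⟫) • γ j)).foldr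
            (· ∘ ·) id) h⟫ := by
  classical
  have hroot0 : ∀ a ∈ Φ, a ≠ 0 := fun a ha h0 => hzero (h0 ▸ ha)
  have hqpos : ∀ a ∈ Φ, (0:ℝ) < ⟪a, a⟫ := fun a ha =>
    lt_of_le_of_ne real_inner_self_nonneg (Ne.symm (inner_self_ne_zero.mpr (hroot0 a ha)))
  have hnegmem : ∀ a ∈ Φ, -a ∈ Φ := fun a ha => aux_neg_mem Φ hzero hrefl ha
  have hgr : ∀ a ∈ Φ, ⟪a, h⟫ = -1 ∨ ⟪a, h⟫ = 0 ∨ ⟪a, h⟫ = 1 := by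
    intro a ha
    have := heuler a ha
    simpa [Set.mem_insert_iff] using this
  have hγq : ∀ j, (0:ℝ) < ⟪γ j, γ j⟫ := fun j => hqpos _ (hγroot j)
  -- pairwise orthogonality of the γ's
  have horthij : ∀ i j, i ≠ j → ⟪γ i, γ j⟫ = 0 := by
    intro i j hij
    rcases lt_trichotomy (⟪γ i, γ j⟫) 0 with hlt | heq | hgt
    · exfalso
      have hne0 : γ i + γ j ≠ 0 := by
        intro e
        have : γ i = -γ j := by
          rw [← sub_eq_zero]; rw [sub_neg_eq_add]; exact e
        have h1 := hγgrade i
        rw [this, inner_neg_left, hγgrade j] at h1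
        norm_num at h1
      exact (hγso i j hij).1 (aux_sum Φ hzero hrefl hint (hγroot i) (hγroot j) hlt hne0)
    · exact heq
    · exfalso
      exact (hγso i j hij).2
        (aux_diff Φ hzero hrefl hint (hγroot i) (hγroot j) hgt (fun e => hij (hγinj e)))
  -- integrality for the γ's
  have hnint : ∀ j, ∀ a ∈ Φ, ∃ m : ℤ, 2 * ⟪γ j, a⟫ = (m : ℝ) * ⟪γ j, γ j⟫ := by
    intro j a ha
    obtain ⟨m, hm⟩ := hint a ha (γ j) (hγroot j)
    refine ⟨m, ?_⟩
    rw [div_eq_iff (ne_of_gt (hγq j))] at hm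
    rw [← real_inner_comm a (γ j)] at hm; exact hm
  -- bound |⟪γ j, a⟫| ≤ ⟪γ j,γ j⟫
  have hboundq : ∀ a ∈ Φ, ∀ j, ⟪a, a⟫ ≤ ⟪γ j, γ j⟫ := by
    intro a ha j
    have := hγlong j a ha
    rw [real_inner_self_eq_norm_sq, real_inner_self_eq_norm_sq]
    exact pow_le_pow_left₀ (norm_nonneg a) this 2
  have habs : ∀ j, ∀ a ∈ Φ, ⟪γ j, a⟫ * ⟪γ j, a⟫ ≤ ⟪γ j, γ j⟫ * ⟪γ j, γ j⟫ := by
    intro j a ha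
    have hCS := real_inner_mul_inner_self_le (γ j) a
    have := hboundq a ha j
    nlinarith [hγq j]
  have hmb : ∀ j, ∀ a ∈ Φ, ∀ m : ℤ, 2 * ⟪γ j, a⟫ = (m:ℝ) * ⟪γ j, γ j⟫ →
      -2 ≤ m ∧ m ≤ 2 := by
    intro j a ha m hm
    have hq := hγq j
    have habs' := habs j a ha
    have e : (2*⟪γ j, a⟫) * (2*⟪γ j, a⟫) = ((m:ℝ) * ⟪γ j, γ j⟫) * ((m:ℝ) * ⟪γ j, γ j⟫) := by
      rw [hm]
    have h4 : (m:ℝ)^2 * (⟪γ j, γ j⟫ * ⟪γ j, γ j⟫) ≤ 4 * (⟪γ j, γ j⟫ * ⟪γ j, γ j⟫) := by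
      nlinarith [e, habs']
    have h5 : (m:ℝ)^2 ≤ 4 := by
      have hqq : (0:ℝ) < ⟪γ j, γ j⟫ * ⟪γ j, γ j⟫ := mul_pos hq hq
      nlinarith
    have h6 : (m:ℤ)^2 ≤ 4 := by exact_mod_cast h5
    constructor <;> nlinarith
  -- value 2 ⟹ a = γ j (and -2 ⟹ a = -γ j via negation)
  have hval2 : ∀ j, ∀ a ∈ Φ, ⟪γ j, a⟫ = ⟪γ j, γ j⟫ → a = γ j := by
    intro j a ha hv
    have h1 : ⟪a - γ j, a - γ j⟫ ≤ 0 := by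
      have e : ⟪a - γ j, a - γ j⟫ = ⟪a,a⟫ - 2*⟪γ j, a⟫ + ⟪γ j, γ j⟫ := by
        simp only [inner_sub_sub_self]
        linear_combination real_inner_comm a (γ j)
      rw [e, hv]
      have := hboundq a ha j
      linarith
    have h2 : ⟪a - γ j, a - γ j⟫ = 0 := le_antisymm h1 real_inner_self_nonneg
    have := inner_self_eq_zero.mp h2
    rw [sub_eq_zero] at this; exact this
  -- grade-1 roots have non-negative inner products with the γ's
  have hgr1nonneg : ∀ a ∈ Φ, ⟪a, h⟫ = 1 → ∀ j, 0 ≤ ⟪γ j, a⟫ := by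
    intro a ha hah j
    by_contra hc
    push_neg at hc
    have hne0 : a + γ j ≠ 0 := by
      intro e
      have : a = -γ j := by rw [← sub_eq_zero, sub_neg_eq_add]; exact e
      rw [this, inner_neg_left, hγgrade j] at hah
      norm_num at hah
    have hmem : a + γ j ∈ Φ := by
      apply aux_sum Φ hzero hrefl hint ha (hγroot j) _ hne0
      rwa [real_inner_comm (γ j) a]
    have := hgr _ hmem
    rw [inner_add_left, hah, hγgrade j] at this
    rcases this with e | e | e <;> norm_num at e
  -- grade-1 values: 0 or half
  have hval1 : ∀ a ∈ Φ, ⟪a, h⟫ = 1 → ∀ j, a ≠ γ j →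
      ⟪γ j, a⟫ = 0 ∨ 2 * ⟪γ j, a⟫ = ⟪γ j, γ j⟫ := by
    intro a ha hah j hne'
    obtain ⟨m, hm⟩ := hnint j a ha
    have hq := hγq j
    have hm0 : 0 ≤ m := by
      have h1 : 0 ≤ (m:ℝ) * ⟪γ j, γ j⟫ := by rw [← hm]; linarith [hgr1nonneg a ha hah j]
      by_contra hc
      push_neg at hc
      have hm1 : m ≤ -1 := by omega
      have : (m:ℝ) ≤ -1 := by exact_mod_cast hm1
      nlinarith
    have hm2 : m ≤ 2 := (hmb j a ha m hm).2
    have hmne2 : m ≠ 2 := by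
      intro e
      rw [e] at hm
      push_cast at hm
      exact hne' (hval2 j a ha (by linarith))
    have : m = 0 ∨ m = 1 := by omega
    rcases this with e | e <;> rw [e] at hm <;> push_cast at hm
    · left; linarith
    · right; linarith
  -- grade-0 values: -half, 0 or half
  have hval0 : ∀ a ∈ Φ, ⟪a, h⟫ = 0 → ∀ j,
      2 * ⟪γ j, a⟫ = -⟪γ j, γ j⟫ ∨ ⟪γ j, a⟫ = 0 ∨ 2 * ⟪γ j, a⟫ = ⟪γ j, γ j⟫ := by
    intro a ha hah j
    obtain ⟨m, hm⟩ := hnint j a ha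
    have hq := hγq j
    have habs' := habs j a ha
    have hm2 : -2 ≤ m ∧ m ≤ 2 := hmb j a ha m hm
    have hmne2 : m ≠ 2 := by
      intro e
      rw [e] at hm
      push_cast at hm
      have := hval2 j a ha (by linarith)
      rw [this, hγgrade j] at hah
      norm_num at hah
    have hmne2' : m ≠ -2 := by
      intro e
      rw [e] at hm
      have hna : -a ∈ Φ := hnegmem a ha
      have : ⟪γ j, -a⟫ = ⟪γ j, γ j⟫ := by
        rw [inner_neg_right]; push_cast at hm; linarith
      have := hval2 j (-a) hna this
      have e2 : a = -γ j := neg_eq_iff_eq_neg.mp this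
      rw [e2, inner_neg_left, hγgrade j] at hah
      norm_num at hah
    obtain ⟨h1, h2⟩ := hm2
    have : m = -1 ∨ m = 0 ∨ m = 1 := by omega
    rcases this with e | e | e <;> rw [e] at hm <;> push_cast at hm
    · left; linarith
    · right; left; linarith
    · right; right; linarith
  -- L6: a grade-0 root cannot pair positively with two different γ's
  have hL6 : ∀ a ∈ Φ, ⟪a, h⟫ = 0 → ∀ j k, j ≠ k →
      2 * ⟪γ j, a⟫ = ⟪γ j, γ j⟫ → 2 * ⟪γ k, a⟫ = ⟪γ k, γ k⟫ → False := by
    intro a ha hah j k hjk hj hk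
    have hja : 0 < ⟪γ j, a⟫ := by linarith [hγq j]
    have hne' : γ j ≠ a := by
      intro e
      rw [← e, hγgrade j] at hah
      norm_num at hah
    have hd : γ j - a ∈ Φ := aux_diff Φ hzero hrefl hint (hγroot j) ha hja hne'
    have hgd : ⟪γ j - a, h⟫ = 1 := by
      rw [inner_sub_left, hγgrade j, hah]; ring
    have := hgr1nonneg (γ j - a) hd hgd k
    rw [inner_sub_right, horthij k j (Ne.symm hjk)] at this
    linarith [hγq k]
  -- if a grade-1 root pairs halfly with exactly one γ, contradiction with hP
  have hPone : ∀ a ∈ Φ, ⟪a, h⟫ = 1 → ∀ j₀, 2 * ⟪γ j₀, a⟫ = ⟪γ j₀, γ j₀⟫ →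
      (∀ j, j ≠ j₀ → ⟪γ j, a⟫ = 0) → False := by
    intro a ha hah j₀ hj₀ hrest
    apply hP j₀
    refine ⟨a, ha, hah, ?_⟩
    rw [Finset.sum_eq_single j₀]
    · congr 1
      rw [div_eq_div_iff (ne_of_gt (hγq j₀)) (two_ne_zero)]
      linarith
    · intro b _ hb
      rw [hrest b hb, zero_div, zero_smul]
    · intro hb
      exact absurd (Finset.mem_univ j₀) hb
  have hCone : ∀ a ∈ Φ, ⟪a, h⟫ = 0 → ∀ j₀, 2 * ⟪γ j₀, a⟫ = ⟪γ j₀, γ j₀⟫ →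
      (∀ j, j ≠ j₀ → ⟪γ j, a⟫ = 0) → False := by
    intro a ha hah j₀ hj₀ hrest
    apply hC j₀
    refine ⟨a, ha, hah, ?_⟩
    rw [Finset.sum_eq_single j₀]
    · congr 1
      rw [div_eq_div_iff (ne_of_gt (hγq j₀)) (two_ne_zero)]
      linarith
    · intro b _ hb
      rw [hrest b hb, zero_div, zero_smul]
    · intro hb
      exact absurd (Finset.mem_univ j₀) hb
  -- long roots span V
  obtain ⟨α₀, hα₀Φ, hα₀⟩ := hne
  obtain ⟨lam, hlamΦ, hlammax⟩ : ∃ l ∈ Φ, ∀ b ∈ Φ, ‖b‖ ≤ ‖l‖ :=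
    Set.exists_max_image Φ norm hfin ⟨α₀, hα₀Φ⟩
  set L : Set V := {l | l ∈ Φ ∧ ∀ b ∈ Φ, ‖b‖ ≤ ‖l‖} with hLdef
  have hLsub : L ⊆ Φ := fun l hl => hl.1
  have hLspan : Submodule.span ℝ L = ⊤ := by
    set Φ₁ : Set V := {a | a ∈ Φ ∧ ∃ l ∈ L, ⟪l, a⟫ ≠ 0} with hΦ₁def
    set Φ₂ : Set V := {a | a ∈ Φ ∧ ∀ l ∈ L, ⟪l, a⟫ = 0} with hΦ₂def
    have hΦ₁U : ∀ a ∈ Φ₁, a ∈ Submodule.span ℝ L := by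
      rintro a ⟨haΦ, l, hlL, hla⟩
      have hqa := hqpos a haΦ
      set c : ℝ := 2 * ⟪a, l⟫ / ⟪a, a⟫ with hcdef
      have hc0 : c ≠ 0 := by
        rw [hcdef]
        apply div_ne_zero _ (ne_of_gt hqa)
        rw [real_inner_comm l a]
        intro hc; apply hla; linarith
      have hμΦ : l - c • a ∈ Φ := hrefl a haΦ l (hLsub hlL)
      have hμq : ⟪l - c • a, l - c • a⟫ = ⟪l, l⟫ := by
        have hca : c * ⟪a, a⟫ = 2 * ⟪a, l⟫ := by
          rw [hcdef]; field_simp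
        simp only [inner_sub_sub_self, real_inner_smul_left, real_inner_smul_right]
        linear_combination c * hca + c * (real_inner_comm l a)
      have hμnorm : ‖l - c • a‖ = ‖l‖ := by
        rw [norm_eq_sqrt_real_inner, norm_eq_sqrt_real_inner, hμq]
      have hμL : l - c • a ∈ L := ⟨hμΦ, fun b hb => (hlL.2 b hb).trans hμnorm.ge⟩
      have : a = c⁻¹ • (l - (l - c • a)) := by
        rw [sub_sub_cancel, smul_smul, inv_mul_cancel₀ hc0, one_smul]
      rw [this]
      exact Submodule.smul_mem _ _ (Submodule.sub_mem _ (Submodule.subset_span hlL)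
        (Submodule.subset_span hμL))
    have hcross : ∀ a ∈ Φ₁, ∀ b ∈ Φ₂, ⟪a, b⟫ = 0 := by
      intro a ha b hb
      exact aux_span_inner L (fun l hl => hb.2 l hl) a (hΦ₁U a ha)
    have hunion : Φ₁ ∪ Φ₂ = Φ := by
      ext a
      constructor
      · rintro (ha | ha) <;> exact ha.1
      · intro ha
        by_cases hcase : ∃ l ∈ L, ⟪l, a⟫ ≠ 0
        · exact Or.inl ⟨ha, hcase⟩
        · push_neg at hcase
          exact Or.inr ⟨ha, hcase⟩
    have hdisj : Φ₁ ∩ Φ₂ = ∅ := by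
      ext a
      simp only [Set.mem_inter_iff, Set.mem_empty_iff_false, iff_false]
      rintro ⟨⟨_, l, hlL, hla⟩, _, ha2⟩
      exact hla (ha2 l hlL)
    rcases hirr Φ₁ Φ₂ hunion hdisj hcross with h1 | h2
    · exfalso
      have : lam ∈ Φ₁ := ⟨hlamΦ, lam, ⟨hlamΦ, hlammax⟩, ne_of_gt (hqpos lam hlamΦ)⟩
      rw [h1] at this; exact this
    · have hΦsub : Φ ⊆ ↑(Submodule.span ℝ L) := by
        intro a ha
        have : a ∈ Φ₁ ∪ Φ₂ := hunion.symm ▸ ha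
        rcases this with h' | h'
        · exact hΦ₁U a h'
        · rw [h2] at h'; exact absurd h' (Set.notMem_empty a)
      have : Submodule.span ℝ Φ ≤ Submodule.span ℝ L := Submodule.span_le.mpr hΦsub
      rw [hspan] at this
      exact top_le_iff.mp this
  have hfindlong : ∀ x : V, x ≠ 0 →
      ∃ l, l ∈ Φ ∧ (∀ b ∈ Φ, ‖b‖ ≤ ‖l‖) ∧ ⟪l, x⟫ ≠ 0 := by
    intro x hx
    by_contra hc
    push_neg at hc
    exact hx (aux_orth_zero L hLspan (fun l hl => hc l hl.1 hl.2))
  -- grade-1 roots orthogonal to all γ's are strongly orthogonal to them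
  have hstrongso : ∀ a ∈ Φ, ⟪a, h⟫ = 1 → (∀ j, ⟪γ j, a⟫ = 0) →
      ∀ j, a + γ j ∉ Φ ∧ a - γ j ∉ Φ := by
    intro a ha hah horth j
    constructor
    · intro hmem
      have := hgr _ hmem
      rw [inner_add_left, hah, hγgrade j] at this
      rcases this with e | e | e <;> norm_num at e
    · intro hmem
      have h1 := hboundq (a - γ j) hmem j
      have h2 : ⟪a - γ j, a - γ j⟫ = ⟪a, a⟫ + ⟪γ j, γ j⟫ := by
        have e := inner_sub_sub_self (𝕜 := ℝ) a (γ j)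
        have e2 := real_inner_comm a (γ j)
        linarith [horth j]
      rw [h2] at h1
      linarith [hqpos a ha]
  have hnolongγ : ∀ a ∈ Φ, ⟪a, h⟫ = 1 → (∀ b ∈ Φ, ‖b‖ ≤ ‖a‖) →
      (∀ j, ⟪γ j, a⟫ = 0) → False := by
    intro a ha hah hlong horth
    obtain ⟨j, hj⟩ := hγmax a ha hah hlong (hstrongso a ha hah horth)
    have := horth j
    rw [hj] at this
    exact (ne_of_gt (hγq j)) this
  -- the hard case: no grade-1 root is orthogonal to all the γ's
  have hhard : ∀ a ∈ Φ, ⟪a, h⟫ = 1 → (∀ j, ⟪γ j, a⟫ = 0) → False := by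
    intro a ha hah horth
    rcases le_or_gt ‖lam‖ ‖a‖ with hl | hs
    · exact hnolongγ a ha hah (fun b hb => (hlammax b hb).trans hl) horth
    · obtain ⟨l, hlΦ, hllong, hla⟩ : ∃ l, l ∈ Φ ∧ (∀ b ∈ Φ, ‖b‖ ≤ ‖l‖) ∧ 0 < ⟪l, a⟫ := by
        obtain ⟨l, hlΦ, hllong, hla⟩ := hfindlong a (hroot0 a ha)
        rcases lt_or_gt_of_ne hla with hneg | hpos
        · refine ⟨-l, hnegmem l hlΦ, fun b hb => (hllong b hb).trans (norm_neg l).ge, ?_⟩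
          rw [inner_neg_left]; linarith
        · exact ⟨l, hlΦ, hllong, hpos⟩
      have hshort : ⟪a, a⟫ < ⟪l, l⟫ := by
        have h1 : ‖a‖ < ‖l‖ := lt_of_lt_of_le hs (hllong lam hlamΦ)
        rw [real_inner_self_eq_norm_sq, real_inner_self_eq_norm_sq]
        nlinarith [norm_nonneg a, norm_nonneg l]
      have hal : ⟪a, l⟫ = ⟪l, a⟫ := real_inner_comm l a
      rcases hgr l hlΦ with hgl | hgl | hgl
      -- grade of l is -1 or 0 : reflect l in a, grade drops by at least 2
      case _ | _ =>
        all_goals {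
        obtain ⟨k, hk⟩ := hint a ha l hlΦ
        obtain ⟨m, hm⟩ := hint l hlΦ a ha
        have hk1 : (1:ℝ) ≤ (k:ℝ) := by
          have hkpos : (0:ℝ) < (k:ℝ) := by
            rw [← hk]
            exact div_pos (by linarith) (hqpos l hlΦ)
          have : (0:ℤ) < k := by exact_mod_cast hkpos
          exact_mod_cast this
        have hkm : (k:ℝ) < (m:ℝ) := by
          rw [← hk, ← hm, hal]
          exact div_lt_div_of_pos_left (by linarith) (hqpos a ha) hshort
        have hm2 : (2:ℝ) ≤ (m:ℝ) := by
          have : k < m := by exact_mod_cast hkm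
          have h1k : 1 ≤ k := by exact_mod_cast hk1
          have : 2 ≤ m := by omega
          exact_mod_cast this
        have hmem := hrefl a ha l hlΦ
        have hcoef : 2 * ⟪a, l⟫ / ⟪a, a⟫ = (m:ℝ) := by rw [hal]; exact hm
        rw [hcoef] at hmem
        have hgr' := hgr _ hmem
        rw [inner_sub_left, real_inner_smul_left, hah] at hgr'
        rw [hgl] at hgr'
        rcases hgr' with e | e | e <;> linarith }
      -- grade of l is 1
      · have hlneγ : ∀ j, l ≠ γ j := by
          intro j e
          rw [e] at hla
          rw [horth j] at hla
          exact lt_irrefl 0 hla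
        have hlnea : l ≠ a := by
          intro e
          rw [e] at hshort
          exact lt_irrefl _ hshort
        have hb : l - a ∈ Φ := aux_diff Φ hzero hrefl hint hlΦ ha hla hlnea
        have hgb : ⟪l - a, h⟫ = 0 := by
          rw [inner_sub_left, hgl, hah]; ring
        have hbval : ∀ j, ⟪γ j, l - a⟫ = ⟪γ j, l⟫ := by
          intro j
          rw [inner_sub_right, horth j, sub_zero]
        set ones : Finset (Fin r) :=
          Finset.univ.filter (fun j => 2 * ⟪γ j, l⟫ = ⟪γ j, γ j⟫) with honesdef
        have honesval : ∀ j, j ∉ ones → ⟪γ j, l⟫ = 0 := by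
          intro j hj
          rcases hval1 l hlΦ hgl j (hlneγ j) with e | e
          · exact e
          · exact absurd (Finset.mem_filter.mpr ⟨Finset.mem_univ j, e⟩) hj
        by_cases h2c : 2 ≤ ones.card
        · obtain ⟨j, hjm, k, hkm, hjk⟩ := Finset.one_lt_card.mp (show 1 < ones.card by omega)
          have hjv := (Finset.mem_filter.mp hjm).2
          have hkv := (Finset.mem_filter.mp hkm).2
          exact hL6 (l - a) hb hgb j k hjk
            (by rw [hbval j]; exact hjv) (by rw [hbval k]; exact hkv)
        by_cases h1c : ones.card = 1
        · obtain ⟨j₀, hj₀⟩ := Finset.card_eq_one.mp h1c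
          have hj₀m : j₀ ∈ ones := by rw [hj₀]; exact Finset.mem_singleton_self j₀
          apply hPone l hlΦ hgl j₀ (Finset.mem_filter.mp hj₀m).2
          intro j hj
          apply honesval
          rw [hj₀, Finset.mem_singleton]
          exact hj
        · have h0c : ones.card = 0 := by omega
          have hempty : ones = ∅ := Finset.card_eq_zero.mp h0c
          apply hnolongγ l hlΦ hgl hllong
          intro j
          apply honesval
          rw [hempty]
          exact Finset.notMem_empty j
  -- the sum rule for grade-1 roots
  have key1 : ∀ a ∈ Φ, ⟪a, h⟫ = 1 → ∑ j, 2 * ⟪γ j, a⟫ / ⟪γ j, γ j⟫ = 2 := by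
    intro a ha hah
    by_cases haγ : ∃ j, a = γ j
    · obtain ⟨j₀, e⟩ := haγ
      rw [Finset.sum_eq_single j₀]
      · rw [e, mul_div_assoc, div_self (ne_of_gt (hγq j₀))]; norm_num
      · intro b _ hb
        rw [e, horthij b j₀ hb, mul_zero, zero_div]
      · intro hb
        exact absurd (Finset.mem_univ j₀) hb
    · push_neg at haγ
      set ones : Finset (Fin r) :=
        Finset.univ.filter (fun j => 2 * ⟪γ j, a⟫ = ⟪γ j, γ j⟫) with honesdef
      have honesval : ∀ j, j ∉ ones → ⟪γ j, a⟫ = 0 := by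
        intro j hj
        rcases hval1 a ha hah j (haγ j) with e | e
        · exact e
        · exact absurd (Finset.mem_filter.mpr ⟨Finset.mem_univ j, e⟩) hj
      have hterm : ∀ j, 2 * ⟪γ j, a⟫ / ⟪γ j, γ j⟫ = if j ∈ ones then 1 else 0 := by
        intro j
        by_cases hj : j ∈ ones
        · rw [if_pos hj, (Finset.mem_filter.mp hj).2, div_self (ne_of_gt (hγq j))]
        · rw [if_neg hj, honesval j hj, mul_zero, zero_div]
      have hsum : ∑ j, 2 * ⟪γ j, a⟫ / ⟪γ j, γ j⟫ = (ones.card : ℝ) := by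
        rw [Finset.sum_congr rfl (fun j _ => hterm j)]
        rw [Finset.sum_ite_mem, Finset.univ_inter, Finset.sum_const, nsmul_eq_mul, mul_one]
      by_cases h3c : 3 ≤ ones.card
      · exfalso
        obtain ⟨j, k, l, hjm, hkm, hlm, hjk, hjl, hkl⟩ :=
          Finset.two_lt_card_iff.mp (show 2 < ones.card by omega)
        have hjv := (Finset.mem_filter.mp hjm).2
        have hkv := (Finset.mem_filter.mp hkm).2
        have hlv := (Finset.mem_filter.mp hlm).2
        -- a - γ j has grade 0 and pairs halfly with γ k and γ l
        have hja : 0 < ⟪a, γ j⟫ := by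
          rw [real_inner_comm (γ j) a]; linarith [hγq j]
        have hd : a - γ j ∈ Φ := aux_diff Φ hzero hrefl hint ha (hγroot j) hja (haγ j)
        have hgd : ⟪a - γ j, h⟫ = 0 := by
          rw [inner_sub_left, hah, hγgrade j]; ring
        apply hL6 (a - γ j) hd hgd k l hkl
        · rw [inner_sub_right, horthij k j (Ne.symm hjk), sub_zero]; exact hkv
        · rw [inner_sub_right, horthij l j (Ne.symm hjl), sub_zero]; exact hlv
      by_cases h2c : ones.card = 2
      · rw [hsum, h2c]; norm_num
      by_cases h1c : ones.card = 1
      · exfalso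
        obtain ⟨j₀, hj₀⟩ := Finset.card_eq_one.mp h1c
        have hj₀m : j₀ ∈ ones := by rw [hj₀]; exact Finset.mem_singleton_self j₀
        apply hPone a ha hah j₀ (Finset.mem_filter.mp hj₀m).2
        intro j hj
        apply honesval
        rw [hj₀, Finset.mem_singleton]
        exact hj
      · exfalso
        have h0c : ones.card = 0 := by omega
        have hempty : ones = ∅ := Finset.card_eq_zero.mp h0c
        apply hhard a ha hah
        intro j
        apply honesval
        rw [hempty]
        exact Finset.notMem_empty j
  -- the sum rule for grade-0 roots
  have key0 : ∀ a ∈ Φ, ⟪a, h⟫ = 0 → ∑ j, 2 * ⟪γ j, a⟫ / ⟪γ j, γ j⟫ = 0 := by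
    intro a ha hah
    set P : Finset (Fin r) :=
      Finset.univ.filter (fun j => 2 * ⟪γ j, a⟫ = ⟪γ j, γ j⟫) with hPdef
    set N : Finset (Fin r) :=
      Finset.univ.filter (fun j => 2 * ⟪γ j, a⟫ = -⟪γ j, γ j⟫) with hNdef
    have hPN : ∀ j, j ∉ P → j ∉ N → ⟪γ j, a⟫ = 0 := by
      intro j hjP hjN
      rcases hval0 a ha hah j with e | e | e
      · exact absurd (Finset.mem_filter.mpr ⟨Finset.mem_univ j, e⟩) hjN
      · exact e
      · exact absurd (Finset.mem_filter.mpr ⟨Finset.mem_univ j, e⟩) hjP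
    have hdisj : ∀ j, j ∈ P → j ∉ N := by
      intro j hjP hjN
      have h1 := (Finset.mem_filter.mp hjP).2
      have h2 := (Finset.mem_filter.mp hjN).2
      have := hγq j
      linarith
    have hPcard : P.card ≤ 1 := by
      by_contra hc
      obtain ⟨j, hjm, k, hkm, hjk⟩ := Finset.one_lt_card.mp (show 1 < P.card by omega)
      exact hL6 a ha hah j k hjk (Finset.mem_filter.mp hjm).2 (Finset.mem_filter.mp hkm).2
    have hNcard : N.card ≤ 1 := by
      by_contra hc
      obtain ⟨j, hjm, k, hkm, hjk⟩ := Finset.one_lt_card.mp (show 1 < N.card by omega)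
      have hna : -a ∈ Φ := hnegmem a ha
      have hgna : ⟪-a, h⟫ = 0 := by rw [inner_neg_left, hah]; ring
      apply hL6 (-a) hna hgna j k hjk
      · rw [inner_neg_right]
        linarith [(Finset.mem_filter.mp hjm).2]
      · rw [inner_neg_right]
        linarith [(Finset.mem_filter.mp hkm).2]
    have hterm : ∀ j, 2 * ⟪γ j, a⟫ / ⟪γ j, γ j⟫ =
        (if j ∈ P then (1:ℝ) else 0) + (if j ∈ N then (-1:ℝ) else 0) := by
      intro j
      by_cases hjP : j ∈ P
      · rw [if_pos hjP, if_neg (hdisj j hjP), (Finset.mem_filter.mp hjP).2,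
          div_self (ne_of_gt (hγq j))]
        ring
      · by_cases hjN : j ∈ N
        · rw [if_neg hjP, if_pos hjN, (Finset.mem_filter.mp hjN).2]
          rw [neg_div, div_self (ne_of_gt (hγq j))]
          ring
        · rw [if_neg hjP, if_neg hjN, hPN j hjP hjN, mul_zero, zero_div]
          ring
    have hsum : ∑ j, 2 * ⟪γ j, a⟫ / ⟪γ j, γ j⟫ = (P.card : ℝ) - (N.card : ℝ) := by
      rw [Finset.sum_congr rfl (fun j _ => hterm j), Finset.sum_add_distrib]
      rw [Finset.sum_ite_mem, Finset.univ_inter, Finset.sum_const, nsmul_eq_mul, mul_one]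
      rw [Finset.sum_ite_mem, Finset.univ_inter, Finset.sum_const, nsmul_eq_mul]
      ring
    -- now rule out the cases card P ≠ card N
    have hPan : ∀ (b : V), b ∈ Φ → ⟪b, h⟫ = 0 → ∀ j₀, 2 * ⟪γ j₀, b⟫ = ⟪γ j₀, γ j₀⟫ →
        (∀ j, j ≠ j₀ → (2 * ⟪γ j, b⟫ = ⟪γ j, γ j⟫ → False) ∧
          (2 * ⟪γ j, b⟫ = -⟪γ j, γ j⟫ → False)) → False := by
      intro b hb hgb j₀ hj₀ hrest
      apply hCone b hb hgb j₀ hj₀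
      intro j hj
      rcases hval0 b hb hgb j with e | e | e
      · exact absurd e (fun e' => ((hrest j hj).2 e'))
      · exact e
      · exact absurd e (fun e' => ((hrest j hj).1 e'))
    rcases Nat.le_one_iff_eq_zero_or_eq_one.mp hPcard with hP0 | hP1 <;>
      rcases Nat.le_one_iff_eq_zero_or_eq_one.mp hNcard with hN0 | hN1
    · rw [hsum, hP0, hN0]; norm_num
    · -- P empty, N singleton : -a contradicts hC
      exfalso
      obtain ⟨j₀, hj₀⟩ := Finset.card_eq_one.mp hN1
      have hj₀m : j₀ ∈ N := by rw [hj₀]; exact Finset.mem_singleton_self j₀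
      have hna : -a ∈ Φ := hnegmem a ha
      have hgna : ⟪-a, h⟫ = 0 := by rw [inner_neg_left, hah]; ring
      apply hCone (-a) hna hgna j₀
      · rw [inner_neg_right]
        linarith [(Finset.mem_filter.mp hj₀m).2]
      · intro j hj
        rw [inner_neg_right, neg_eq_zero]
        apply hPN j
        · intro hjP
          have := Finset.card_eq_zero.mp hP0
          rw [this] at hjP
          exact Finset.notMem_empty j hjP
        · intro hjN
          rw [hj₀, Finset.mem_singleton] at hjN
          exact hj hjN
    · -- P singleton, N empty : a contradicts hC
      exfalso
      obtain ⟨j₀, hj₀⟩ := Finset.card_eq_one.mp hP1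
      have hj₀m : j₀ ∈ P := by rw [hj₀]; exact Finset.mem_singleton_self j₀
      apply hCone a ha hah j₀ (Finset.mem_filter.mp hj₀m).2
      intro j hj
      apply hPN j
      · intro hjP
        rw [hj₀, Finset.mem_singleton] at hjP
        exact hj hjP
      · intro hjN
        have := Finset.card_eq_zero.mp hN0
        rw [this] at hjN
        exact Finset.notMem_empty j hjN
    · rw [hsum, hP1, hN1]; norm_num
  -- the sum rule for all roots
  have keyAll : ∀ a ∈ Φ, ∑ j, 2 * ⟪γ j, a⟫ / ⟪γ j, γ j⟫ = 2 * ⟪a, h⟫ := by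
    intro a ha
    rcases hgr a ha with e | e | e
    · have hna : -a ∈ Φ := hnegmem a ha
      have hgna : ⟪-a, h⟫ = 1 := by rw [inner_neg_left, e]; ring
      have := key1 (-a) hna hgna
      have e2 : ∑ j, 2 * ⟪γ j, -a⟫ / ⟪γ j, γ j⟫ = -∑ j, 2 * ⟪γ j, a⟫ / ⟪γ j, γ j⟫ := by
        rw [← Finset.sum_neg_distrib]
        apply Finset.sum_congr rfl
        intro j _
        rw [inner_neg_right]
        ring
      rw [e2] at this
      rw [e]
      linarith
    · rw [e, key0 a ha e]; ring
    · rw [e, key1 a ha e]; ring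
  -- conclude : 2•h equals the sum of the coroots
  have hxzero : (2:ℝ) • h - (∑ j, (2 / ⟪γ j, γ j⟫) • γ j) = 0 := by
    apply aux_orth_zero Φ hspan
    intro a ha
    rw [inner_sub_right, inner_sum, real_inner_smul_right]
    have e1 : ∀ j, ⟪a, (2 / ⟪γ j, γ j⟫) • γ j⟫ = 2 * ⟪γ j, a⟫ / ⟪γ j, γ j⟫ := by
      intro j
      rw [real_inner_smul_right, real_inner_comm a (γ j)]
      ring
    rw [Finset.sum_congr rfl (fun j _ => e1 j), keyAll a ha, real_inner_comm h a]
    ring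
  have hmain : h = (1 / 2 : ℝ) • ∑ j, (2 / ⟪γ j, γ j⟫) • γ j := by
    have h2 : (2:ℝ) • h = ∑ j, (2 / ⟪γ j, γ j⟫) • γ j := by
      rw [← sub_eq_zero]; exact hxzero
    rw [← h2, smul_smul]
    norm_num
  refine ⟨hmain, ?_⟩
  -- second part : the product of the reflections sends h to -h
  have hfold : ∀ (l : List (Fin r)), l.Nodup →
      ((l.map fun j : Fin r =>
          (fun x : V => x - (2 * ⟪γ j, x⟫ / ⟪γ j, γ j⟫) • γ j)).foldr (· ∘ ·) id) h =
        h - (l.map fun j => (2 / ⟪γ j, γ j⟫) • γ j).sum := by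
    intro l hl
    induction l with
    | nil => simp
    | cons j t ih =>
      have hjt : j ∉ t := (List.nodup_cons.mp hl).1
      have hnt : t.Nodup := (List.nodup_cons.mp hl).2
      have hinner : ∀ (t' : List (Fin r)), j ∉ t' →
          ⟪γ j, (t'.map fun i => (2 / ⟪γ i, γ i⟫) • γ i).sum⟫ = 0 := by
        intro t'
        induction t' with
        | nil => simp
        | cons i s ihs =>
          intro hmem
          have hji : j ≠ i := fun e => hmem (by rw [e]; exact List.mem_cons_self)
          have hjs : j ∉ s := fun e => hmem (List.mem_cons_of_mem i e)
          rw [List.map_cons, List.sum_cons, inner_add_right, ihs hjs,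
            real_inner_smul_right, horthij j i hji]
          ring
      rw [List.map_cons, List.foldr_cons, Function.comp_apply, ih hnt]
      rw [List.map_cons, List.sum_cons]
      have hval : 2 * ⟪γ j, h - (t.map fun i => (2 / ⟪γ i, γ i⟫) • γ i).sum⟫ /
          ⟪γ j, γ j⟫ = 2 / ⟪γ j, γ j⟫ := by
        rw [inner_sub_right, hinner t hjt, hγgrade j]
        ring
      rw [hval]
      abel
  have hFh : ((List.ofFn fun j : Fin r =>
      (fun x : V => x - (2 * ⟪γ j, x⟫ / ⟪γ j, γ j⟫) • γ j)).foldr (· ∘ ·) id) h = -h := by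
    rw [List.ofFn_eq_map]
    rw [hfold (List.finRange r) (List.nodup_finRange r)]
    have e1 : ((List.finRange r).map fun j => (2 / ⟪γ j, γ j⟫) • γ j).sum =
        ∑ j, (2 / ⟪γ j, γ j⟫) • γ j := by
      rw [← List.ofFn_eq_map, List.sum_ofFn]
    rw [e1]
    have h2 : (2:ℝ) • h = ∑ j, (2 / ⟪γ j, γ j⟫) • γ j := by
      rw [← sub_eq_zero]; exact hxzero
    rw [← h2]
    module
  intro a ha
  rw [hFh, inner_neg_right, neg_neg]
end
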